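/- arXiv:1803.05052 — 14 statements merged into one kernel-verified Lean document; each statement's English description precedes it below -/
import Mathlib

section
/- Let w and v be equivalent weights with a·v_n ≤ w_n ≤ b·v_n for all n. Suppose A, B are finite subsets of ℕ with v(A) ≤ v(B), and let Γ = {n ∈ A : w_n ≥ w(B)}. If A∖Γ is partitioned into consecutive blocks A_1 < A_2 < ... < A_m, each A_i maximal subject to w(A_i) ≤ w(B), then m ≤ 2b/a + 1. -/
theorem stmt1 (w v : ℕ → ℝ) (a b : ℝ) (ha : 0 < a) (hab : a ≤ b)
    (hvpos : ∀ n, 0 < v n) (hwpos : ∀ n, 0 < w n)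
    (heq : ∀ n, a * v n ≤ w n ∧ w n ≤ b * v n)
    (A B : Finset ℕ) (hAB : ∑ n ∈ A, v n ≤ ∑ n ∈ B, v n)
    (m : ℕ) (hm : 2 ≤ m) (blocks : ℕ → Finset ℕ)
    (hsub : ∀ i < m, blocks i ⊆ A \ (A.filter fun n => ∑ k ∈ B, w k ≤ w n))
    (hdisj : ∀ i < m, ∀ j < m, i ≠ j → Disjoint (blocks i) (blocks j))
    (horder : ∀ i, i + 1 < m → ∀ x ∈ blocks i, ∀ y ∈ blocks (i+1), x < y)
    (hunion : (Finset.range m).biUnion blocks = A \ (A.filter fun n => ∑ k ∈ B, w k ≤ w n))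
    (hmax : ∀ i, i + 1 < m →
      ∑ k ∈ B, w k < ∑ k ∈ blocks i, w k + ∑ k ∈ blocks (i+1), w k) :
    (m : ℝ) ≤ 2 * b / a + 1 := by
  set S := ∑ k ∈ B, w k with hS
  set f := fun i => ∑ k ∈ blocks i, w k with hf
  have hSnn : 0 ≤ S := Finset.sum_nonneg fun k _ => (hwpos k).le
  have hbnn : ∀ i, 0 ≤ f i := fun i => Finset.sum_nonneg fun k _ => (hwpos k).le
  have h01 : S < f 0 + f 1 := hmax 0 (by omega)
  -- Γc := A \ Γ is nonempty
  have hne : (A \ (A.filter fun n => S ≤ w n)).Nonempty := by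
    by_contra h
    rw [Finset.not_nonempty_iff_eq_empty] at h
    have h0 : blocks 0 = ∅ := Finset.subset_empty.mp (h ▸ hsub 0 (by omega))
    have h1 : blocks 1 = ∅ := Finset.subset_empty.mp (h ▸ hsub 1 (by omega))
    have : f 0 = 0 := by simp [hf, h0]
    have : f 1 = 0 := by simp [hf, h1]
    simp_all
    linarith
  obtain ⟨n, hn⟩ := hne
  have hnA : n ∈ A := (Finset.mem_sdiff.mp hn).1
  have hnS : w n < S := by
    have := (Finset.mem_sdiff.mp hn).2
    simp only [Finset.mem_filter, not_and, not_le] at this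
    exact this hnA
  have hSpos : 0 < S := (hwpos n).trans hnS
  -- total
  set T := ∑ i ∈ Finset.range m, f i with hT
  have hTeq : T = ∑ k ∈ A \ (A.filter fun n => S ≤ w n), w k := by
    rw [hT, hf, ← hunion, Finset.sum_biUnion]
    intro i hi j hj hij
    exact hdisj i (Finset.mem_range.mp hi) j (Finset.mem_range.mp hj) hij
  have haT : a * T ≤ b * S := by
    have h1 : T ≤ ∑ k ∈ A, w k := by
      rw [hTeq]
      exact Finset.sum_le_sum_of_subset_of_nonneg Finset.sdiff_subset
        (fun k _ _ => (hwpos k).le)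
    have h2 : ∑ k ∈ A, w k ≤ b * ∑ k ∈ A, v k := by
      rw [Finset.mul_sum]
      exact Finset.sum_le_sum fun k _ => (heq k).2
    have h3 : a * ∑ k ∈ B, v k ≤ S := by
      rw [hS, Finset.mul_sum]
      exact Finset.sum_le_sum fun k _ => (heq k).1
    have h4 : 0 ≤ ∑ k ∈ B, v k := Finset.sum_nonneg fun k _ => (hvpos k).le
    have hb : 0 < b := lt_of_lt_of_le ha hab
    calc a * T ≤ a * (b * ∑ k ∈ A, v k) := by
          exact mul_le_mul_of_nonneg_left (h1.trans h2) ha.le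
      _ ≤ a * (b * ∑ k ∈ B, v k) := by
          apply mul_le_mul_of_nonneg_left (mul_le_mul_of_nonneg_left hAB hb.le) ha.le
      _ = b * (a * ∑ k ∈ B, v k) := by ring
      _ ≤ b * S := mul_le_mul_of_nonneg_left h3 hb.le
  -- summation over consecutive pairs
  have hlt : ((m - 1 : ℕ) : ℝ) * S < ∑ i ∈ Finset.range (m - 1), (f i + f (i + 1)) := by
    have := Finset.sum_lt_sum_of_nonempty (s := Finset.range (m - 1))
      (f := fun _ => S) (g := fun i => f i + f (i + 1))
      ⟨0, by simp; omega⟩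
      (fun i hi => hmax i (by simp only [Finset.mem_range] at hi; omega))
    simpa [Finset.sum_const, nsmul_eq_mul] using this
  have hsplit : ∑ i ∈ Finset.range (m - 1), (f i + f (i + 1))
      = ∑ i ∈ Finset.range (m - 1), f i + ∑ i ∈ Finset.range (m - 1), f (i + 1) :=
    Finset.sum_add_distrib
  have hle1 : ∑ i ∈ Finset.range (m - 1), f i ≤ T := by
    rw [hT]
    exact Finset.sum_le_sum_of_subset_of_nonneg
      (Finset.range_subset_range.mpr (by omega)) (fun i _ _ => hbnn i)
  have hle2 : ∑ i ∈ Finset.range (m - 1), f (i + 1) ≤ T := by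
    have hm1 : m - 1 + 1 = m := by omega
    have h := Finset.sum_range_succ' f (m - 1)
    rw [hm1] at h
    rw [hT, h]
    linarith [hbnn 0]
  have key : ((m - 1 : ℕ) : ℝ) * S < 2 * T := by
    rw [hsplit] at hlt; linarith
  have hcast : ((m - 1 : ℕ) : ℝ) = (m : ℝ) - 1 := by
    push_cast [Nat.cast_sub (by omega : 1 ≤ m)]; ring
  have hfin : ((m : ℝ) - 1) * a < 2 * b := by
    rw [hcast] at key
    nlinarith
  have : (m : ℝ) - 1 ≤ 2 * b / a := by
    rw [le_div_iff₀ ha]; linarith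
  linarith
end

section
/- In a Banach space X with a semi-normalized Schauder basis (e_n) with biorthogonal functionals (e_n*), if the basis is C_g-w-greedy (i.e., ‖x − G_m(x)‖ ≤ C_g·σ^w_{w(A_m(x))}(x) for all x and m, where G_m is the thresholding greedy approximand and A_m(x) its greedy set), then the basis is suppression unconditional with constant at most C_g: for every x ∈ X and every finite A ⊂ ℕ, ‖x − P_A(x)‖ ≤ C_g‖x‖. -/
open Filter

theorem stmt2 {X : Type*} [NormedAddCommGroup X] [NormedSpace ℝ X] [CompleteSpace X]
    (e : ℕ → X) (f : ℕ → X →L[ℝ] ℝ) (c₁ c₂ : ℝ) (hc₁ : 0 < c₁)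
    (hsn : ∀ n, c₁ ≤ ‖e n‖ ∧ ‖e n‖ ≤ c₂ ∧ c₁ ≤ ‖f n‖ ∧ ‖f n‖ ≤ c₂)
    (hbi : ∀ i j, f i (e j) = if i = j then (1:ℝ) else 0)
    (hexp : ∀ x : X, Tendsto (fun m => ∑ i ∈ Finset.range m, f i x • e i) atTop (nhds x))
    (w : ℕ → ℝ) (hw : ∀ n, 0 < w n)
    (Cg : ℝ) (hCg : 1 ≤ Cg)
    (hgreedy : ∀ (x : X) (Λ : Finset ℕ),
      (∀ k ∈ Λ, ∀ j ∉ Λ, |f j x| ≤ |f k x|) →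
      ∀ (A : Finset ℕ) (α : ℕ → ℝ), ∑ n ∈ A, w n ≤ ∑ n ∈ Λ, w n →
        ‖x - ∑ k ∈ Λ, f k x • e k‖ ≤ Cg * ‖x - ∑ n ∈ A, α n • e n‖) :
    ∀ (x : X) (A : Finset ℕ), ‖x - ∑ n ∈ A, f n x • e n‖ ≤ Cg * ‖x‖ := by
  intro x A
  have hc₂ : 0 < c₂ := lt_of_lt_of_le hc₁ (le_trans (hsn 0).1 (hsn 0).2.1)
  set M : ℝ := 2 * c₂ * ‖x‖ with hM
  set z : X := x + M • ∑ n ∈ A, e n with hz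
  have hfz : ∀ j, f j z = f j x + (if j ∈ A then M else 0) := by
    intro j
    simp only [hz, map_add, map_smul, map_sum, hbi, smul_eq_mul,
      Finset.sum_ite_eq' A j (fun _ => (1:ℝ))]
    by_cases h : j ∈ A <;> simp [h]
  have hbound : ∀ j, |f j x| ≤ c₂ * ‖x‖ := by
    intro j
    calc |f j x| = ‖f j x‖ := (Real.norm_eq_abs _).symm
    _ ≤ ‖f j‖ * ‖x‖ := (f j).le_opNorm x
    _ ≤ c₂ * ‖x‖ := by
        exact mul_le_mul_of_nonneg_right (hsn j).2.2.2 (norm_nonneg x)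
  have cond : ∀ k ∈ A, ∀ j ∉ A, |f j z| ≤ |f k z| := by
    intro k hk j hj
    rw [hfz j, hfz k, if_neg hj, if_pos hk, add_zero]
    have h1 : |f j x| ≤ c₂ * ‖x‖ := hbound j
    have h2 : |f k x| ≤ c₂ * ‖x‖ := hbound k
    have : c₂ * ‖x‖ ≤ |f k x + M| := by
      have : M - |f k x| ≤ |f k x + M| := by
        have := abs_add_le (f k x) M
        have hMabs : |M| = M := abs_of_nonneg (by positivity)
        have := neg_abs_le (f k x)
        have := le_abs_self (f k x + M)
        have := neg_abs_le (f k x + M)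
        cases abs_cases (f k x + M) with
        | inl h => linarith [neg_abs_le (f k x), h.1]
        | inr h => nlinarith [abs_nonneg (f k x), h.1, neg_abs_le (f k x)]
      linarith
    linarith
  have key := hgreedy z A cond A (fun _ => M) le_rfl
  have e1 : z - ∑ k ∈ A, f k z • e k = x - ∑ k ∈ A, f k x • e k := by
    have : ∑ k ∈ A, f k z • e k = ∑ k ∈ A, f k x • e k + M • ∑ k ∈ A, e k := by
      rw [Finset.smul_sum, ← Finset.sum_add_distrib]
      refine Finset.sum_congr rfl fun k hk => ?_
      rw [hfz k, if_pos hk, add_smul]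
    rw [hz, this]
    abel
  have e2 : z - ∑ n ∈ A, (fun _ => M) n • e n = x := by
    rw [hz, Finset.smul_sum]
    simp
  rw [e1, e2] at key
  exact key
end

section
/- If a semi-normalized Schauder basis of a Banach space is K_u-suppression-unconditional and has the w-Property (A) with constant C_a, then it is w-greedy with constant C_g ≤ K_u·C_a. -/
open Filter Set

/-! With `P_D x = Σ_{n ∈ D} f_n(x) e_n`, put `v = x - P_{Λ ∪ A} x`, so that
`x - P_Λ x = v + P_{A \ Λ} x`, and let `t = min_{k ∈ Λ} |f_k(x)|`, which dominates every
coefficient of `x` off `Λ`. A convex function on a box is bounded by its values at the vertices,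
so `P_{A \ Λ} x` may be replaced by the worst `t 1_{ε(A \ Λ)}`. Property (A) trades this for
`t 1_{η(Λ \ A)}`, `η` the signs of `x`, at the cost `C_a`. By the same convexity,
`v + t 1_{η(Λ \ A)}` is dominated by the vectors `v + P_S x = x - P_D x`, `S ⊆ Λ \ A`, where
`A ⊆ D`; since `P_D` fixes the competitor `Σ_{n ∈ A} α_n e_n`, suppression unconditionality
bounds each of them by `K_u ‖x - Σ_{n ∈ A} α_n e_n‖`. -/

theorem ConvexOn.le_of_forall_vertex {E ι : Type*} [AddCommGroup E] [Module ℝ E]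
    [DecidableEq ι] {g : E → ℝ} (hg : ConvexOn ℝ univ g) (e : ι → E) {p q c : ι → ℝ} {M : ℝ}
    (S : Finset ι) (hc : ∀ n ∈ S, c n ∈ uIcc (p n) (q n))
    (hM : ∀ T ⊆ S, g (∑ n ∈ S, (if n ∈ T then q n else p n) • e n) ≤ M) :
    g (∑ n ∈ S, c n • e n) ≤ M := by
  induction S using Finset.induction_on generalizing g with
  | empty => simpa using hM ∅ le_rfl
  | insert s S hs ih =>
    rw [Finset.sum_insert hs]
    refine ih (g := fun y => g (c s • e s + y))
      (by simpa [Function.comp_def] using hg.translate_right (c s • e s))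
      (fun n hn => hc n (Finset.mem_insert_of_mem hn)) fun T hT => ?_
    set Y := ∑ n ∈ S, (if n ∈ T then q n else p n) • e n
    have hline : ConvexOn ℝ univ (fun r : ℝ => g (r • e s + Y)) := by
      simpa [Function.comp_def, AffineMap.lineMap_apply] using
        hg.comp_affineMap (AffineMap.lineMap Y (Y + e s))
    have hcs : c s ∈ segment ℝ (p s) (q s) := by
      rw [segment_eq_uIcc]; exact hc s (Finset.mem_insert_self s S)
    have hsT : s ∉ T := fun h => hs (hT h)
    refine (hline.le_on_segment (mem_univ _) (mem_univ _) hcs).trans (max_le ?_ ?_)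
    · have := hM T (hT.trans (Finset.subset_insert s S))
      rwa [Finset.sum_insert hs, if_neg hsT] at this
    · have hY : ∑ n ∈ S, (if n ∈ insert s T then q n else p n) • e n = Y :=
        Finset.sum_congr rfl fun n hn => by
          simp only [Finset.mem_insert, ne_of_mem_of_not_mem hn hs, false_or]
      have := hM (insert s T) (Finset.insert_subset_insert s hT)
      rwa [Finset.sum_insert hs, if_pos (Finset.mem_insert_self s T), hY] at this

section SignVectors

variable {X ι : Type*} [NormedAddCommGroup X] [NormedSpace ℝ X] [DecidableEq ι]
  (e : ι → X) (v : X) {t M : ℝ}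

theorem norm_add_sum_le_of_forall_signs {a : ι → ℝ} {D : Finset ι} (ha : ∀ n ∈ D, |a n| ≤ t)
    (hM : ∀ ε : ι → ℝ, (∀ n, ε n = 1 ∨ ε n = -1) → ‖v + ∑ n ∈ D, (t * ε n) • e n‖ ≤ M) :
    ‖v + ∑ n ∈ D, a n • e n‖ ≤ M := by
  refine (convexOn_univ_norm.translate_right v).le_of_forall_vertex e (p := fun _ => -t)
    (q := fun _ => t) D (fun n hn => ?_) fun T _ => ?_
  · rw [uIcc_of_le (neg_le_self ((abs_nonneg _).trans (ha n hn)))]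
    exact abs_le.mp (ha n hn)
  · have := hM (fun n => if n ∈ T then 1 else -1) fun n => by by_cases h : n ∈ T <;> simp [h]
    simpa [Function.comp_def, apply_ite (t * ·)] using this

theorem norm_add_sum_signs_le_of_forall_subset (ht : 0 ≤ t) {b : ι → ℝ} {D : Finset ι}
    (hb : ∀ n ∈ D, t ≤ |b n|) (hM : ∀ S ⊆ D, ‖v + ∑ n ∈ S, b n • e n‖ ≤ M) :
    ‖v + ∑ n ∈ D, (t * if b n < 0 then -1 else 1) • e n‖ ≤ M := by
  refine (convexOn_univ_norm.translate_right v).le_of_forall_vertex e (p := fun _ => 0)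
    (q := b) D (fun n hn => ?_) fun T hT => ?_
  · have := hb n hn
    by_cases hneg : b n < 0
    · rw [abs_of_neg hneg] at this
      rw [if_pos hneg, mem_uIcc]
      right; constructor <;> linarith
    · rw [abs_of_nonneg (not_lt.mp hneg)] at this
      rw [if_neg hneg, mem_uIcc]
      left; constructor <;> linarith
  · simpa [Function.comp_def, ite_smul, Finset.sum_ite_mem, Finset.inter_eq_right.mpr hT]
      using hM T hT

end SignVectors

section Basis

variable {X : Type*} [NormedAddCommGroup X] [NormedSpace ℝ X]

def Biorthogonal (e : ℕ → X) (f : ℕ → X →L[ℝ] ℝ) : Prop :=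
  ∀ i j, f i (e j) = if i = j then (1:ℝ) else 0

def IsSuppressionUnconditional (e : ℕ → X) (f : ℕ → X →L[ℝ] ℝ) (Ku : ℝ) : Prop :=
  ∀ (x : X) (A : Finset ℕ), ‖x - ∑ n ∈ A, f n x • e n‖ ≤ Ku * ‖x‖

def HasWPropertyA (e : ℕ → X) (f : ℕ → X →L[ℝ] ℝ) (w : ℕ → ℝ) (Ca : ℝ) : Prop :=
  ∀ (x : X) (A B : Finset ℕ) (ε η : ℕ → ℝ) (t : ℝ),
    (∀ n, ε n = 1 ∨ ε n = -1) → (∀ n, η n = 1 ∨ η n = -1) →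
    ∑ n ∈ A, w n ≤ ∑ n ∈ B, w n → Disjoint A B →
    (∀ n ∈ A ∪ B, f n x = 0) → (∀ j, |f j x| ≤ t) →
    ‖x + ∑ n ∈ A, (t * ε n) • e n‖ ≤ Ca * ‖x + ∑ n ∈ B, (t * η n) • e n‖

variable {e : ℕ → X} {f : ℕ → X →L[ℝ] ℝ}

theorem Biorthogonal.apply_sum (hbi : Biorthogonal e f) (S : Finset ℕ) (c : ℕ → ℝ) (n : ℕ) :
    f n (∑ m ∈ S, c m • e m) = if n ∈ S then c n else 0 := by
  simp only [map_sum, map_smul, hbi n, smul_eq_mul, mul_ite, mul_one, mul_zero]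
  exact Finset.sum_ite_eq S n c

theorem Biorthogonal.apply_sub_sum (hbi : Biorthogonal e f) (x : X) (D : Finset ℕ) (n : ℕ) :
    f n (x - ∑ m ∈ D, f m x • e m) = if n ∈ D then 0 else f n x := by
  rw [map_sub, hbi.apply_sum]
  split_ifs <;> simp

theorem IsSuppressionUnconditional.norm_sub_sum_le {Ku : ℝ}
    (hunc : IsSuppressionUnconditional e f Ku) (hbi : Biorthogonal e f) (x : X)
    {A D : Finset ℕ} (hAD : A ⊆ D) (α : ℕ → ℝ) :
    ‖x - ∑ n ∈ D, f n x • e n‖ ≤ Ku * ‖x - ∑ n ∈ A, α n • e n‖ := by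
  set y := ∑ n ∈ A, α n • e n
  have hy : ∑ n ∈ D, f n y • e n = y := by
    simp_rw [y, hbi.apply_sum, ite_smul, zero_smul, Finset.sum_ite_mem,
      Finset.inter_eq_right.mpr hAD]
  have hx : x - ∑ n ∈ D, f n x • e n = (x - y) - ∑ n ∈ D, f n (x - y) • e n := by
    simp_rw [map_sub, sub_smul, Finset.sum_sub_distrib, hy]
    abel
  rw [hx]
  exact hunc _ _

theorem norm_sub_sum_le_of_threshold {w : ℕ → ℝ} {Ku Ca : ℝ} (hbi : Biorthogonal e f)
    (hunc : IsSuppressionUnconditional e f Ku) (hA : HasWPropertyA e f w Ca) (hCa : 0 ≤ Ca)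
    {x : X} {Λ A : Finset ℕ} (α : ℕ → ℝ) {t : ℝ} (ht : 0 ≤ t)
    (hΛ : ∀ k ∈ Λ, t ≤ |f k x|) (hΛc : ∀ j ∉ Λ, |f j x| ≤ t) (hw : ∑ n ∈ A, w n ≤ ∑ n ∈ Λ, w n) :
    ‖x - ∑ k ∈ Λ, f k x • e k‖ ≤ Ku * Ca * ‖x - ∑ n ∈ A, α n • e n‖ := by
  set v := x - ∑ n ∈ Λ ∪ A, f n x • e n with hv
  set η : ℕ → ℝ := fun n => if f n x < 0 then -1 else 1
  have hη : ∀ n, η n = 1 ∨ η n = -1 := fun n => by by_cases h : f n x < 0 <;> simp [η, h]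
  have hfv : ∀ n ∈ Λ ∪ A, f n v = 0 := fun n hn => by simp [v, hbi.apply_sub_sum, hn]
  have hsplit : x - ∑ k ∈ Λ, f k x • e k = v + ∑ n ∈ A \ Λ, f n x • e n := by
    rw [hv, ← Finset.union_sdiff_left,
      ← Finset.sum_sdiff (Finset.subset_union_left (s₂ := A))]
    abel
  have hΛA : ‖v + ∑ n ∈ Λ \ A, (t * η n) • e n‖ ≤ Ku * ‖x - ∑ n ∈ A, α n • e n‖ := by
    refine norm_add_sum_signs_le_of_forall_subset e v ht
      (fun n hn => hΛ n (Finset.mem_sdiff.mp hn).1) fun S hS => ?_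
    have hSB : S ⊆ Λ ∪ A := hS.trans (Finset.sdiff_subset.trans Finset.subset_union_left)
    have hAS : A ⊆ (Λ ∪ A) \ S := Finset.subset_sdiff.mpr ⟨Finset.subset_union_right,
      Finset.disjoint_right.mpr fun n hn => (Finset.mem_sdiff.mp (hS hn)).2⟩
    have : v + ∑ n ∈ S, f n x • e n = x - ∑ n ∈ (Λ ∪ A) \ S, f n x • e n := by
      rw [hv, ← Finset.sum_sdiff hSB]
      abel
    rw [this]
    exact hunc.norm_sub_sum_le hbi x hAS α
  have hAΛ : ∀ ε : ℕ → ℝ, (∀ n, ε n = 1 ∨ ε n = -1) →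
      ‖v + ∑ n ∈ A \ Λ, (t * ε n) • e n‖ ≤ Ca * ‖v + ∑ n ∈ Λ \ A, (t * η n) • e n‖ := by
    refine fun ε hε => hA v _ _ ε η t hε hη ?_ disjoint_sdiff_sdiff ?_ fun j => ?_
    · linarith [Finset.sum_sdiff_sub_sum_sdiff (s₁ := A) (s₂ := Λ) (f := w)]
    · intro n hn
      refine hfv n ?_
      rcases Finset.mem_union.mp hn with h | h <;> simp [Finset.mem_sdiff.mp h]
    · rw [hbi.apply_sub_sum]
      split_ifs with hj
      · simpa using ht
      · exact hΛc j fun h => hj (Finset.mem_union_left A h)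
  rw [hsplit, mul_comm Ku, mul_assoc]
  exact norm_add_sum_le_of_forall_signs e v (fun n hn => hΛc n (Finset.mem_sdiff.mp hn).2)
    fun ε hε => (hAΛ ε hε).trans (mul_le_mul_of_nonneg_left hΛA hCa)

end Basis

theorem stmt3_general {X : Type*} [NormedAddCommGroup X] [NormedSpace ℝ X]
    (e : ℕ → X) (f : ℕ → X →L[ℝ] ℝ)
    (hbi : ∀ i j, f i (e j) = if i = j then (1:ℝ) else 0)
    (w : ℕ → ℝ) (hw : ∀ n, 0 < w n)
    (Ku Ca : ℝ) (hKu : 1 ≤ Ku) (hCa : 1 ≤ Ca)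
    (hunc : ∀ (x : X) (A : Finset ℕ), ‖x - ∑ n ∈ A, f n x • e n‖ ≤ Ku * ‖x‖)
    (hA : ∀ (x : X) (A B : Finset ℕ) (ε η : ℕ → ℝ) (t : ℝ),
      (∀ n, ε n = 1 ∨ ε n = -1) → (∀ n, η n = 1 ∨ η n = -1) →
      ∑ n ∈ A, w n ≤ ∑ n ∈ B, w n → Disjoint A B →
      (∀ n ∈ A ∪ B, f n x = 0) → (∀ j, |f j x| ≤ t) →
      ‖x + ∑ n ∈ A, (t * ε n) • e n‖ ≤ Ca * ‖x + ∑ n ∈ B, (t * η n) • e n‖) :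
    ∀ (x : X) (Λ : Finset ℕ),
      (∀ k ∈ Λ, ∀ j ∉ Λ, |f j x| ≤ |f k x|) →
      ∀ (A : Finset ℕ) (α : ℕ → ℝ), ∑ n ∈ A, w n ≤ ∑ n ∈ Λ, w n →
        ‖x - ∑ k ∈ Λ, f k x • e k‖ ≤ (Ku * Ca) * ‖x - ∑ n ∈ A, α n • e n‖ := by
  intro x Λ hgreedy A α hwA
  rcases Λ.eq_empty_or_nonempty with rfl | hΛ
  · obtain rfl : A = ∅ := Finset.not_nonempty_iff_eq_empty.mp fun hA' =>
      (Finset.sum_pos (fun n _ => hw n) hA').not_ge (by simpa using hwA)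
    simpa using le_mul_of_one_le_left (norm_nonneg x) (one_le_mul_of_one_le_of_one_le hKu hCa)
  · exact norm_sub_sum_le_of_threshold hbi hunc hA (by linarith) α
      (Finset.le_inf' hΛ _ fun k _ => abs_nonneg _) (fun k hk => Finset.inf'_le _ hk)
      (fun j hj => Finset.le_inf' hΛ _ fun k hk => hgreedy k hk j hj) hwA

theorem stmt3 {X : Type*} [NormedAddCommGroup X] [NormedSpace ℝ X] [CompleteSpace X]
    (e : ℕ → X) (f : ℕ → X →L[ℝ] ℝ) (c₁ c₂ : ℝ) (hc₁ : 0 < c₁)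
    (hsn : ∀ n, c₁ ≤ ‖e n‖ ∧ ‖e n‖ ≤ c₂ ∧ c₁ ≤ ‖f n‖ ∧ ‖f n‖ ≤ c₂)
    (hbi : ∀ i j, f i (e j) = if i = j then (1:ℝ) else 0)
    (hexp : ∀ x : X, Tendsto (fun m => ∑ i ∈ Finset.range m, f i x • e i) atTop (nhds x))
    (w : ℕ → ℝ) (hw : ∀ n, 0 < w n)
    (Ku Ca : ℝ) (hKu : 1 ≤ Ku) (hCa : 1 ≤ Ca)
    (hunc : ∀ (x : X) (A : Finset ℕ), ‖x - ∑ n ∈ A, f n x • e n‖ ≤ Ku * ‖x‖)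
    (hA : ∀ (x : X) (A B : Finset ℕ) (ε η : ℕ → ℝ) (t : ℝ),
      (∀ n, ε n = 1 ∨ ε n = -1) → (∀ n, η n = 1 ∨ η n = -1) →
      ∑ n ∈ A, w n ≤ ∑ n ∈ B, w n → Disjoint A B →
      (∀ n ∈ A ∪ B, f n x = 0) → (∀ j, |f j x| ≤ t) →
      ‖x + ∑ n ∈ A, (t * ε n) • e n‖ ≤ Ca * ‖x + ∑ n ∈ B, (t * η n) • e n‖) :
    ∀ (x : X) (Λ : Finset ℕ),
      (∀ k ∈ Λ, ∀ j ∉ Λ, |f j x| ≤ |f k x|) →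
      ∀ (A : Finset ℕ) (α : ℕ → ℝ), ∑ n ∈ A, w n ≤ ∑ n ∈ Λ, w n →
        ‖x - ∑ k ∈ Λ, f k x • e k‖ ≤ (Ku * Ca) * ‖x - ∑ n ∈ A, α n • e n‖ :=
  stmt3_general e f hbi w hw Ku Ca hKu hCa hunc hA
end

section
/- If a semi-normalized Schauder basis is C_q-quasi-greedy and has the C_a-w-Property (A), then it is w-almost-greedy with constant at most C_q·C_a. -/
open Filter

section Aux
variable {X : Type*} [NormedAddCommGroup X] [NormedSpace ℝ X]

lemma aux_seg5 (u v : X) (a t : ℝ) (h : |a| ≤ t) :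
    ‖u + a • v‖ ≤ max ‖u + t • v‖ ‖u + (-t) • v‖ := by
  have ht0 : 0 ≤ t := (abs_nonneg a).trans h
  rcases ht0.eq_or_lt with ht | ht
  · have ha : a = 0 := abs_nonpos_iff.mp (h.trans ht.ge)
    simp [ha, ← ht]
  · obtain ⟨hta1, hta2⟩ := abs_le.mp h
    set β : ℝ := (a + t) / (2 * t) with hβ
    set α : ℝ := (t - a) / (2 * t) with hα
    have hα0 : 0 ≤ α := by rw [hα]; exact div_nonneg (by linarith) (by linarith)
    have hβ0 : 0 ≤ β := by rw [hβ]; exact div_nonneg (by linarith) (by linarith)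
    have hαβ : α + β = 1 := by rw [hα, hβ]; field_simp; ring
    have hkey : u + a • v = α • (u + (-t) • v) + β • (u + t • v) := by
      have hab : α * (-t) + β * t = a := by rw [hα, hβ]; field_simp; ring
      match_scalars
      · linarith
      · rw [hα, hβ]; field_simp; ring
    calc ‖u + a • v‖ = ‖α • (u + (-t) • v) + β • (u + t • v)‖ := by rw [hkey]
      _ ≤ α * ‖u + (-t) • v‖ + β * ‖u + t • v‖ := by
          refine (norm_add_le _ _).trans ?_
          rw [norm_smul, norm_smul, Real.norm_of_nonneg hα0, Real.norm_of_nonneg hβ0]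
      _ ≤ α * max ‖u + t • v‖ ‖u + (-t) • v‖ + β * max ‖u + t • v‖ ‖u + (-t) • v‖ := by
          gcongr
          exacts [le_max_right _ _, le_max_left _ _]
      _ = max ‖u + t • v‖ ‖u + (-t) • v‖ := by rw [← add_mul, hαβ, one_mul]

lemma coef_sum5 (e : ℕ → X) (f : ℕ → X →L[ℝ] ℝ)
    (hbi : ∀ i j, f i (e j) = if i = j then (1:ℝ) else 0)
    (S : Finset ℕ) (a : ℕ → ℝ) (j : ℕ) :
    f j (∑ k ∈ S, a k • e k) = if j ∈ S then a j else 0 := by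
  rw [map_sum]
  simp only [map_smul, hbi, smul_eq_mul, mul_ite, mul_one, mul_zero]
  exact Finset.sum_ite_eq S j a

lemma convex_signs5 (e : ℕ → X) (t : ℝ) (a : ℕ → ℝ)
    (D : Finset ℕ) (hD : ∀ n ∈ D, |a n| ≤ t) (v : X) :
    ∃ ε : ℕ → ℝ, (∀ n, ε n = 1 ∨ ε n = -1) ∧
      ‖v + ∑ n ∈ D, a n • e n‖ ≤ ‖v + ∑ n ∈ D, (t * ε n) • e n‖ := by
  induction D using Finset.induction_on generalizing v with
  | empty => exact ⟨fun _ => 1, fun _ => Or.inl rfl, le_of_eq (by simp)⟩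
  | @insert m D hm ih =>
    obtain ⟨ε, hε, hle⟩ := ih (fun n hn => hD n (Finset.mem_insert_of_mem hn)) (v + a m • e m)
    have hseg := aux_seg5 (v + ∑ n ∈ D, (t * ε n) • e n) (e m) (a m) t
      (hD m (Finset.mem_insert_self m D))
    obtain ⟨s, hs, hles⟩ : ∃ s : ℝ, (s = 1 ∨ s = -1) ∧
        ‖(v + ∑ n ∈ D, (t * ε n) • e n) + a m • e m‖
          ≤ ‖(v + ∑ n ∈ D, (t * ε n) • e n) + (t * s) • e m‖ := by
      rcases le_max_iff.mp hseg with h' | h'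
      · exact ⟨1, Or.inl rfl, by simpa [mul_one] using h'⟩
      · exact ⟨-1, Or.inr rfl, by simpa [mul_neg_one] using h'⟩
    refine ⟨Function.update ε m s, ?_, ?_⟩
    · intro n
      rcases eq_or_ne n m with rfl | hnm
      · simpa using hs
      · simpa [Function.update_of_ne hnm] using hε n
    · have e1 : ∑ n ∈ insert m D, (t * Function.update ε m s n) • e n
          = (t * s) • e m + ∑ n ∈ D, (t * ε n) • e n := by
        rw [Finset.sum_insert hm, Function.update_self]
        congr 1
        exact Finset.sum_congr rfl fun n hn => by
          rw [Function.update_of_ne (ne_of_mem_of_not_mem hn hm)]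
      rw [Finset.sum_insert hm, e1]
      calc ‖v + (a m • e m + ∑ n ∈ D, a n • e n)‖
          = ‖(v + a m • e m) + ∑ n ∈ D, a n • e n‖ := by rw [add_assoc]
        _ ≤ ‖(v + a m • e m) + ∑ n ∈ D, (t * ε n) • e n‖ := hle
        _ = ‖(v + ∑ n ∈ D, (t * ε n) • e n) + a m • e m‖ := by congr 1; abel
        _ ≤ ‖(v + ∑ n ∈ D, (t * ε n) • e n) + (t * s) • e m‖ := hles
        _ = ‖v + ((t * s) • e m + ∑ n ∈ D, (t * ε n) • e n)‖ := by congr 1; abel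

lemma trunc_bound5 (e : ℕ → X) (f : ℕ → X →L[ℝ] ℝ)
    (Cq : ℝ) (hCq : 1 ≤ Cq)
    (hqg : ∀ (x : X) (Λ : Finset ℕ),
      (∀ k ∈ Λ, ∀ j ∉ Λ, |f j x| ≤ |f k x|) →
      ‖x - ∑ k ∈ Λ, f k x • e k‖ ≤ Cq * ‖x‖)
    (y : X) :
    ∀ (n : ℕ) (A : Finset ℕ) (t : ℝ), A.card ≤ n → 0 ≤ t →
      (∀ k ∈ A, t ≤ |f k y|) → (∀ j, j ∉ A → |f j y| ≤ t) →
      ∃ η : ℕ → ℝ, (∀ i, η i = 1 ∨ η i = -1) ∧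
        ‖(y - ∑ k ∈ A, f k y • e k) + ∑ k ∈ A, (t * η k) • e k‖ ≤ Cq * ‖y‖ := by
  intro n
  induction n with
  | zero =>
    intro A t hcard _ _ _
    have hA : A = ∅ := Finset.card_eq_zero.mp (Nat.le_zero.mp hcard)
    subst hA
    exact ⟨fun _ => 1, fun _ => Or.inl rfl, by
      simpa using le_mul_of_one_le_left (norm_nonneg y) hCq⟩
  | succ n ih =>
    intro A t hcard ht0 htA htout
    rcases A.eq_empty_or_nonempty with rfl | hne
    · exact ⟨fun _ => 1, fun _ => Or.inl rfl, by
        simpa using le_mul_of_one_le_left (norm_nonneg y) hCq⟩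
    have hgrA : ∀ k ∈ A, ∀ j ∉ A, |f j y| ≤ |f k y| :=
      fun k hk j hj => (htout j hj).trans (htA k hk)
    have hz : ‖y - ∑ k ∈ A, f k y • e k‖ ≤ Cq * ‖y‖ := hqg y A hgrA
    rcases ht0.eq_or_lt with ht | ht
    · refine ⟨fun _ => 1, fun _ => Or.inl rfl, ?_⟩
      simpa [← ht] using hz
    obtain ⟨m, hmA, hmin⟩ := A.exists_min_image (fun k => |f k y|) hne
    set b : ℝ := |f m y| with hbdef
    have htb : t ≤ b := htA m hmA
    have hb : 0 < b := lt_of_lt_of_le ht htb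
    have hcard' : (A.erase m).card ≤ n := by
      have h1 := Finset.card_erase_of_mem hmA
      have h2 : 1 ≤ A.card := Finset.card_pos.mpr hne
      omega
    obtain ⟨η', hη', hb1⟩ := ih (A.erase m) b hcard' hb.le
      (fun k hk => hmin k (Finset.mem_of_mem_erase hk))
      (by
        intro j hj
        rcases eq_or_ne j m with rfl | hjm
        · exact le_of_eq rfl
        · exact (htout j (fun hjA => hj (Finset.mem_erase.mpr ⟨hjm, hjA⟩))).trans htb)
    set s : ℝ := if f m y < 0 then (-1:ℝ) else 1 with hsdef
    have hbs : b * s = f m y := by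
      rcases lt_or_ge (f m y) 0 with hneg | hpos
      · rw [hsdef, if_pos hneg, hbdef, abs_of_neg hneg]; ring
      · rw [hsdef, if_neg (not_lt.mpr hpos), hbdef, abs_of_nonneg hpos]; ring
    set η : ℕ → ℝ := Function.update η' m s with hηdef
    have hs1 : s = 1 ∨ s = -1 := by
      rw [hsdef]; split
      · exact Or.inr rfl
      · exact Or.inl rfl
    have hηs : ∀ i, η i = 1 ∨ η i = -1 := by
      intro i
      rcases eq_or_ne i m with h | h
      · rw [hηdef, h, Function.update_self]; exact hs1
      · rw [hηdef, Function.update_of_ne h]; exact hη' i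
    have E1 : (y - ∑ k ∈ A, f k y • e k) + ∑ k ∈ A, (b * η k) • e k
        = (y - ∑ k ∈ A.erase m, f k y • e k) + ∑ k ∈ A.erase m, (b * η' k) • e k := by
      rw [← Finset.add_sum_erase A (fun k => f k y • e k) hmA,
          ← Finset.add_sum_erase A (fun k => (b * η k) • e k) hmA]
      have : ∑ k ∈ A.erase m, (b * η k) • e k = ∑ k ∈ A.erase m, (b * η' k) • e k :=
        Finset.sum_congr rfl fun k hk => by
          rw [hηdef, Function.update_of_ne (Finset.ne_of_mem_erase hk)]
      rw [this, hηdef]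
      simp only [Function.update_self]
      rw [hbs]
      abel
    set θ : ℝ := t / b with hθdef
    have hθ1 : θ ≤ 1 := (div_le_one hb).mpr htb
    have hθ0 : 0 ≤ θ := div_nonneg ht0 hb.le
    have hθb : θ * b = t := div_mul_cancel₀ t hb.ne'
    have E2 : (y - ∑ k ∈ A, f k y • e k) + ∑ k ∈ A, (t * η k) • e k
        = (1 - θ) • (y - ∑ k ∈ A, f k y • e k)
          + θ • ((y - ∑ k ∈ A, f k y • e k) + ∑ k ∈ A, (b * η k) • e k) := by
      have hsum : ∑ k ∈ A, (t * η k) • e k = θ • ∑ k ∈ A, (b * η k) • e k := by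
        rw [Finset.smul_sum]
        exact Finset.sum_congr rfl fun k _ => by
          rw [smul_smul, ← mul_assoc, hθb]
      rw [hsum]
      match_scalars <;> ring
    rw [E1] at E2
    refine ⟨η, hηs, ?_⟩
    calc ‖(y - ∑ k ∈ A, f k y • e k) + ∑ k ∈ A, (t * η k) • e k‖
        = ‖(1 - θ) • (y - ∑ k ∈ A, f k y • e k)
            + θ • ((y - ∑ k ∈ A.erase m, f k y • e k) + ∑ k ∈ A.erase m, (b * η' k) • e k)‖ := by
          rw [E2]
      _ ≤ (1 - θ) * ‖y - ∑ k ∈ A, f k y • e k‖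
            + θ * ‖(y - ∑ k ∈ A.erase m, f k y • e k) + ∑ k ∈ A.erase m, (b * η' k) • e k‖ := by
          refine (norm_add_le _ _).trans ?_
          rw [norm_smul, norm_smul, Real.norm_of_nonneg (by linarith), Real.norm_of_nonneg hθ0]
      _ ≤ (1 - θ) * (Cq * ‖y‖) + θ * (Cq * ‖y‖) := by gcongr <;> linarith
      _ = Cq * ‖y‖ := by ring

end Aux

theorem stmt5 {X : Type*} [NormedAddCommGroup X] [NormedSpace ℝ X] [CompleteSpace X]
    (e : ℕ → X) (f : ℕ → X →L[ℝ] ℝ) (c₁ c₂ : ℝ) (hc₁ : 0 < c₁)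
    (hsn : ∀ n, c₁ ≤ ‖e n‖ ∧ ‖e n‖ ≤ c₂ ∧ c₁ ≤ ‖f n‖ ∧ ‖f n‖ ≤ c₂)
    (hbi : ∀ i j, f i (e j) = if i = j then (1:ℝ) else 0)
    (hexp : ∀ x : X, Tendsto (fun m => ∑ i ∈ Finset.range m, f i x • e i) atTop (nhds x))
    (w : ℕ → ℝ) (hw : ∀ n, 0 < w n)
    (Cq Ca : ℝ) (hCq : 1 ≤ Cq) (hCa : 1 ≤ Ca)
    (hqg : ∀ (x : X) (Λ : Finset ℕ),
      (∀ k ∈ Λ, ∀ j ∉ Λ, |f j x| ≤ |f k x|) →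
      ‖x - ∑ k ∈ Λ, f k x • e k‖ ≤ Cq * ‖x‖)
    (hA : ∀ (x : X) (A B : Finset ℕ) (ε η : ℕ → ℝ) (t : ℝ),
      (∀ n, ε n = 1 ∨ ε n = -1) → (∀ n, η n = 1 ∨ η n = -1) →
      ∑ n ∈ A, w n ≤ ∑ n ∈ B, w n → Disjoint A B →
      (∀ n ∈ A ∪ B, f n x = 0) → (∀ j, |f j x| ≤ t) →
      ‖x + ∑ n ∈ A, (t * ε n) • e n‖ ≤ Ca * ‖x + ∑ n ∈ B, (t * η n) • e n‖) :
    ∀ (x : X) (Λ : Finset ℕ),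
      (∀ k ∈ Λ, ∀ j ∉ Λ, |f j x| ≤ |f k x|) →
      ∀ B : Finset ℕ, ∑ n ∈ B, w n ≤ ∑ n ∈ Λ, w n →
        ‖x - ∑ k ∈ Λ, f k x • e k‖ ≤ (Cq * Ca) * ‖x - ∑ n ∈ B, f n x • e n‖ := by
  intro x Λ hgreedy B hwB
  rcases Λ.eq_empty_or_nonempty with rfl | hΛne
  · -- Λ empty forces B empty
    have hB : B = ∅ := by
      by_contra hBne
      have : (0:ℝ) < ∑ n ∈ B, w n :=
        Finset.sum_pos (fun n _ => hw n) (Finset.nonempty_iff_ne_empty.mpr hBne)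
      simp only [Finset.sum_empty] at hwB
      linarith
    subst hB
    simp only [Finset.sum_empty, sub_zero]
    nlinarith [norm_nonneg x, mul_le_mul hCq hCa (by norm_num) (by linarith)]
  · set t : ℝ := Λ.inf' hΛne (fun k => |f k x|) with htdef
    have htΛ : ∀ k ∈ Λ, t ≤ |f k x| := fun k hk => Finset.inf'_le _ hk
    have ht0 : 0 ≤ t := Finset.le_inf' hΛne _ (fun k _ => abs_nonneg _)
    have htout : ∀ j, j ∉ Λ → |f j x| ≤ t :=
      fun j hj => Finset.le_inf' hΛne _ (fun k hk => hgreedy k hk j hj)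
    set y : X := x - ∑ n ∈ B, f n x • e n with hydef
    set z : X := x - ∑ n ∈ Λ ∪ B, f n x • e n with hzdef
    have hycoef : ∀ j, f j y = if j ∈ B then 0 else f j x := by
      intro j
      rw [hydef, map_sub, coef_sum5 e f hbi]
      split <;> simp
    have hzcoef : ∀ j, f j z = if j ∈ Λ ∪ B then 0 else f j x := by
      intro j
      rw [hzdef, map_sub, coef_sum5 e f hbi]
      split <;> simp
    -- truncation applied to y on Λ \ B
    obtain ⟨η, hη, hTr⟩ := trunc_bound5 e f Cq hCq hqg y (Λ \ B).card (Λ \ B) t le_rfl ht0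
      (by
        intro k hk
        rw [hycoef k, if_neg (Finset.mem_sdiff.mp hk).2]
        exact htΛ k (Finset.mem_sdiff.mp hk).1)
      (by
        intro j hj
        rw [hycoef j]
        split
        · simpa using ht0
        · rename_i hjB
          have hjΛ : j ∉ Λ := fun hjΛ => hj (Finset.mem_sdiff.mpr ⟨hjΛ, hjB⟩)
          exact htout j hjΛ)
    -- rewrite trunc LHS base point as z
    have hzy : y - ∑ k ∈ Λ \ B, f k y • e k = z := by
      have h1 : ∑ k ∈ Λ \ B, f k y • e k = ∑ k ∈ Λ \ B, f k x • e k :=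
        Finset.sum_congr rfl fun k hk => by
          rw [hycoef k, if_neg (Finset.mem_sdiff.mp hk).2]
      have h2 : ∑ n ∈ Λ ∪ B, f n x • e n
          = ∑ n ∈ B, f n x • e n + ∑ k ∈ Λ \ B, f k x • e k := by
        rw [← Finset.sum_union Finset.disjoint_sdiff, Finset.union_sdiff_self_eq_union,
          Finset.union_comm]
      rw [h1, hydef, hzdef, h2]
      abel
    rw [hzy] at hTr
    -- convexity on B \ Λ
    obtain ⟨ε, hε, hCv⟩ := convex_signs5 e t (fun n => f n x) (B \ Λ)
      (fun n hn => htout n (Finset.mem_sdiff.mp hn).2) z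
    -- weights
    have hsum : ∑ n ∈ B \ Λ, w n ≤ ∑ n ∈ Λ \ B, w n := by
      have h1 := Finset.sum_inter_add_sum_sdiff B Λ w
      have h2 := Finset.sum_inter_add_sum_sdiff Λ B w
      have h3 : ∑ n ∈ B ∩ Λ, w n = ∑ n ∈ Λ ∩ B, w n := by rw [Finset.inter_comm]
      linarith
    have hPA := hA z (B \ Λ) (Λ \ B) ε η t hε hη hsum
      (disjoint_sdiff_sdiff)
      (by
        intro n hn
        rw [hzcoef n, if_pos]
        rcases Finset.mem_union.mp hn with h | h
        · exact Finset.mem_union.mpr (Or.inr (Finset.mem_sdiff.mp h).1)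
        · exact Finset.mem_union.mpr (Or.inl (Finset.mem_sdiff.mp h).1))
      (by
        intro j
        rw [hzcoef j]
        split
        · simpa using ht0
        · rename_i hj
          exact htout j (fun hjΛ => hj (Finset.mem_union.mpr (Or.inl hjΛ))))
    -- identify LHS
    have hxz : x - ∑ k ∈ Λ, f k x • e k = z + ∑ n ∈ B \ Λ, f n x • e n := by
      have h2 : ∑ n ∈ Λ ∪ B, f n x • e n
          = ∑ n ∈ Λ, f n x • e n + ∑ n ∈ B \ Λ, f n x • e n := by
        rw [← Finset.sum_union Finset.disjoint_sdiff, Finset.union_sdiff_self_eq_union]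
      rw [hzdef, h2]
      abel
    have hCa0 : (0:ℝ) ≤ Ca := by linarith
    calc ‖x - ∑ k ∈ Λ, f k x • e k‖
        = ‖z + ∑ n ∈ B \ Λ, (f n x) • e n‖ := by rw [hxz]
      _ ≤ ‖z + ∑ n ∈ B \ Λ, (t * ε n) • e n‖ := hCv
      _ ≤ Ca * ‖z + ∑ n ∈ Λ \ B, (t * η n) • e n‖ := hPA
      _ ≤ Ca * (Cq * ‖y‖) := by gcongr
      _ = (Cq * Ca) * ‖x - ∑ n ∈ B, f n x • e n‖ := by rw [hydef]; ring
end

section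
/- A semi-normalized Schauder basis has the C_a-w-Property (A) if and only if ‖x‖ ≤ C_a‖x − P_A(x) + 1_{ηB}‖ for every x ∈ X with sup_j |e_j*(x)| ≤ 1, every pair of finite sets A, B with w(A) ≤ w(B) and B ∩ supp(x) = ∅, and every choice of signs η. -/
open Filter

theorem conv_aux {X : Type*} [NormedAddCommGroup X] [NormedSpace ℝ X] (v : ℕ → X) :
    ∀ (S : Finset ℕ) (z : X) (M : ℝ) (a : ℕ → ℝ),
    (∀ n ∈ S, |a n| ≤ 1) →
    (∀ ε : ℕ → ℝ, (∀ n, ε n = 1 ∨ ε n = -1) → ‖z + ∑ n ∈ S, ε n • v n‖ ≤ M) →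
    ‖z + ∑ n ∈ S, a n • v n‖ ≤ M := by
  intro S
  induction S using Finset.induction_on with
  | empty =>
    intro z M a _ h
    simpa using h (fun _ => 1) (fun _ => Or.inl rfl)
  | @insert m S' hm ih =>
    intro z M a ha h
    have key : ∀ ε : ℕ → ℝ, (∀ n, ε n = 1 ∨ ε n = -1) →
        ‖(z + a m • v m) + ∑ n ∈ S', ε n • v n‖ ≤ M := by
      intro ε hε
      set u := z + ∑ n ∈ S', ε n • v n with hu
      have h1 : ‖u + v m‖ ≤ M := by
        have := h (Function.update ε m 1) (by
          intro n
          rcases eq_or_ne n m with rfl | hn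
          · simp
          · simpa [Function.update_of_ne hn] using hε n)
        rw [Finset.sum_insert hm] at this
        have hs : ∑ n ∈ S', Function.update ε m 1 n • v n = ∑ n ∈ S', ε n • v n := by
          refine Finset.sum_congr rfl fun n hn => ?_
          exact congrArg (· • v n) (Function.update_of_ne (by rintro rfl; exact hm hn) _ _)
        rw [hs] at this
        simpa [hu, add_comm, add_left_comm, add_assoc] using this
      have h2 : ‖u - v m‖ ≤ M := by
        have := h (Function.update ε m (-1)) (by
          intro n
          rcases eq_or_ne n m with rfl | hn
          · simp
          · simpa [Function.update_of_ne hn] using hε n)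
        rw [Finset.sum_insert hm] at this
        have hs : ∑ n ∈ S', Function.update ε m (-1) n • v n = ∑ n ∈ S', ε n • v n := by
          refine Finset.sum_congr rfl fun n hn => ?_
          exact congrArg (· • v n) (Function.update_of_ne (by rintro rfl; exact hm hn) _ _)
        rw [hs] at this
        rw [Function.update_self] at this
        simpa [hu, sub_eq_add_neg, add_comm, add_left_comm, add_assoc] using this
      have ham : |a m| ≤ 1 := ha m (Finset.mem_insert_self m S')
      rw [abs_le] at ham
      have hθ1 : (0:ℝ) ≤ (1 + a m) / 2 := by linarith [ham.1]
      have hθ2 : (0:ℝ) ≤ (1 - a m) / 2 := by linarith [ham.2]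
      have heq : (z + a m • v m) + ∑ n ∈ S', ε n • v n
          = ((1 + a m)/2) • (u + v m) + ((1 - a m)/2) • (u - v m) := by
        rw [hu]; module
      rw [heq]
      calc ‖((1 + a m)/2) • (u + v m) + ((1 - a m)/2) • (u - v m)‖
          ≤ ‖((1 + a m)/2) • (u + v m)‖ + ‖((1 - a m)/2) • (u - v m)‖ := norm_add_le _ _
        _ = ((1 + a m)/2) * ‖u + v m‖ + ((1 - a m)/2) * ‖u - v m‖ := by
            rw [norm_smul, norm_smul, Real.norm_eq_abs, Real.norm_eq_abs,
              abs_of_nonneg hθ1, abs_of_nonneg hθ2]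
        _ ≤ ((1 + a m)/2) * M + ((1 - a m)/2) * M := by
            gcongr
        _ = M := by ring
    have := ih (z + a m • v m) M a (fun n hn => ha n (Finset.mem_insert_of_mem hn)) key
    rw [Finset.sum_insert hm]
    simpa [add_comm, add_left_comm, add_assoc] using this

theorem coord_aux {X : Type*} [NormedAddCommGroup X] [NormedSpace ℝ X]
    (e : ℕ → X) (f : ℕ → X →L[ℝ] ℝ)
    (hbi : ∀ i j, f i (e j) = if i = j then (1:ℝ) else 0)
    (S : Finset ℕ) (a : ℕ → ℝ) (n : ℕ) :
    f n (∑ m ∈ S, a m • e m) = if n ∈ S then a n else 0 := by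
  rw [map_sum]
  simp only [map_smul, hbi, smul_eq_mul, mul_ite, mul_one, mul_zero]
  simp [Finset.sum_ite_eq]

theorem stmt6 {X : Type*} [NormedAddCommGroup X] [NormedSpace ℝ X] [CompleteSpace X]
    (e : ℕ → X) (f : ℕ → X →L[ℝ] ℝ) (c₁ c₂ : ℝ) (hc₁ : 0 < c₁)
    (hsn : ∀ n, c₁ ≤ ‖e n‖ ∧ ‖e n‖ ≤ c₂ ∧ c₁ ≤ ‖f n‖ ∧ ‖f n‖ ≤ c₂)
    (hbi : ∀ i j, f i (e j) = if i = j then (1:ℝ) else 0)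
    (hexp : ∀ x : X, Tendsto (fun m => ∑ i ∈ Finset.range m, f i x • e i) atTop (nhds x))
    (w : ℕ → ℝ) (hw : ∀ n, 0 < w n)
    (Ca : ℝ) (hCa : 1 ≤ Ca) :
    (∀ (x : X) (A B : Finset ℕ) (ε η : ℕ → ℝ) (t : ℝ),
      (∀ n, ε n = 1 ∨ ε n = -1) → (∀ n, η n = 1 ∨ η n = -1) →
      ∑ n ∈ A, w n ≤ ∑ n ∈ B, w n → Disjoint A B →
      (∀ n ∈ A ∪ B, f n x = 0) → (∀ j, |f j x| ≤ t) →
      ‖x + ∑ n ∈ A, (t * ε n) • e n‖ ≤ Ca * ‖x + ∑ n ∈ B, (t * η n) • e n‖)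
    ↔
    (∀ (x : X), (∀ j, |f j x| ≤ 1) →
      ∀ (A B : Finset ℕ) (η : ℕ → ℝ), (∀ n, η n = 1 ∨ η n = -1) →
      ∑ n ∈ A, w n ≤ ∑ n ∈ B, w n → (∀ n ∈ B, f n x = 0) →
      ‖x‖ ≤ Ca * ‖x - (∑ n ∈ A, f n x • e n) + ∑ n ∈ B, η n • e n‖) := by
  constructor
  · -- forward
    intro h1 x hx A B η hη hwAB hB
    set y : X := x - ∑ n ∈ A, f n x • e n with hy
    have hyc : ∀ n, f n y = f n x - (if n ∈ A then f n x else 0) := by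
      intro n
      rw [hy, map_sub, coord_aux e f hbi]
    have hsum : ∑ n ∈ A \ B, f n x • e n = ∑ n ∈ A, f n x • e n := by
      refine Finset.sum_subset Finset.sdiff_subset fun n hnA hn => ?_
      have hnB : n ∈ B := by
        by_contra hnB
        exact hn (Finset.mem_sdiff.mpr ⟨hnA, hnB⟩)
      rw [hB n hnB, zero_smul]
    have hx_eq : x = y + ∑ n ∈ A \ B, f n x • e n := by
      rw [hsum, hy]; abel
    have key : ∀ ε : ℕ → ℝ, (∀ n, ε n = 1 ∨ ε n = -1) →
        ‖y + ∑ n ∈ A \ B, ε n • e n‖ ≤ Ca * ‖y + ∑ n ∈ B, η n • e n‖ := by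
      intro ε hε
      have h := h1 y (A \ B) B ε η 1 hε hη
        (le_trans (Finset.sum_le_sum_of_subset_of_nonneg Finset.sdiff_subset
          (fun n _ _ => (hw n).le)) hwAB)
        Finset.sdiff_disjoint
        (by
          intro n hn
          rw [hyc]
          rcases Finset.mem_union.mp hn with hn | hn
          · rcases Finset.mem_sdiff.mp hn with ⟨hnA, _⟩
            simp [hnA]
          · rw [hB n hn]
            simp)
        (by
          intro j
          rw [hyc]
          by_cases hj : j ∈ A
          · simp [hj]
          · simpa [hj] using hx j)
      simpa using h
    have ha : ∀ n ∈ A \ B, |f n x| ≤ 1 := fun n _ => hx n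
    have := conv_aux e (A \ B) y (Ca * ‖y + ∑ n ∈ B, η n • e n‖) (fun n => f n x) ha key
    calc ‖x‖ = ‖y + ∑ n ∈ A \ B, f n x • e n‖ := by rw [← hx_eq]
      _ ≤ Ca * ‖y + ∑ n ∈ B, η n • e n‖ := this
  · -- reverse
    intro h2 x A B ε η t hε hη hwAB hdisj hsupp ht
    have ht0 : 0 ≤ t := le_trans (abs_nonneg _) (ht 0)
    rcases eq_or_lt_of_le ht0 with h0 | h0
    · simp only [← h0, zero_mul, zero_smul, Finset.sum_const_zero, add_zero]
      exact le_mul_of_one_le_left (norm_nonneg x) hCa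
    · have htne : t ≠ 0 := ne_of_gt h0
      set x₀ : X := t⁻¹ • x + ∑ n ∈ A, ε n • e n with hx₀
      have hx₀j : ∀ j, f j x₀ = t⁻¹ * f j x + (if j ∈ A then ε j else 0) := by
        intro j
        rw [hx₀, map_add, map_smul, coord_aux e f hbi, smul_eq_mul]
      have hb : ∀ j, |f j x₀| ≤ 1 := by
        intro j
        rw [hx₀j]
        by_cases hj : j ∈ A
        · rw [hsupp j (Finset.mem_union_left _ hj)]
          rcases hε j with h | h <;> simp [hj, h]
        · simp only [hj, if_false, add_zero, abs_mul, abs_inv, abs_of_pos h0]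
          calc t⁻¹ * |f j x| ≤ t⁻¹ * t := by
                exact mul_le_mul_of_nonneg_left (ht j) (inv_nonneg.mpr ht0)
            _ = 1 := inv_mul_cancel₀ htne
      have hB0 : ∀ n ∈ B, f n x₀ = 0 := by
        intro n hn
        have hnA : n ∉ A := Finset.disjoint_right.mp hdisj hn
        rw [hx₀j, hsupp n (Finset.mem_union_right _ hn)]
        simp [hnA]
      have h := h2 x₀ hb A B η hη hwAB hB0
      have hPA : ∑ n ∈ A, f n x₀ • e n = ∑ n ∈ A, ε n • e n := by
        refine Finset.sum_congr rfl fun n hn => ?_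
        rw [hx₀j, hsupp n (Finset.mem_union_left _ hn)]
        simp [hn]
      rw [hPA] at h
      have hx₀sub : x₀ - ∑ n ∈ A, ε n • e n = t⁻¹ • x := by
        rw [hx₀]; abel
      rw [hx₀sub] at h
      have e1 : x + ∑ n ∈ A, (t * ε n) • e n = t • x₀ := by
        rw [hx₀, smul_add, smul_smul, mul_inv_cancel₀ htne, one_smul, Finset.smul_sum]
        congr 1
        exact Finset.sum_congr rfl fun n _ => (smul_smul t (ε n) (e n)).symm
      have e2 : x + ∑ n ∈ B, (t * η n) • e n = t • (t⁻¹ • x + ∑ n ∈ B, η n • e n) := by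
        rw [smul_add, smul_smul, mul_inv_cancel₀ htne, one_smul, Finset.smul_sum]
        congr 1
        exact Finset.sum_congr rfl fun n _ => (smul_smul t (η n) (e n)).symm
      rw [e1, e2, norm_smul, norm_smul, Real.norm_eq_abs, abs_of_pos h0]
      calc t * ‖x₀‖ ≤ t * (Ca * ‖t⁻¹ • x + ∑ n ∈ B, η n • e n‖) :=
            mul_le_mul_of_nonneg_left h ht0
        _ = Ca * (t * ‖t⁻¹ • x + ∑ n ∈ B, η n • e n‖) := by ring
end

section
/- If a semi-normalized Schauder basis has the w-Property (A) with constant C_a, then it is w-superdemocratic with constant at most 2C_a: for all finite sets A, B with w(A) ≤ w(B) and all sign choices ε, η, one has ‖1_{εA}‖ ≤ 2C_a‖1_{ηB}‖. -/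
open Filter

theorem stmt8 {X : Type*} [NormedAddCommGroup X] [NormedSpace ℝ X] [CompleteSpace X]
    (e : ℕ → X) (f : ℕ → X →L[ℝ] ℝ) (c₁ c₂ : ℝ) (hc₁ : 0 < c₁)
    (hsn : ∀ n, c₁ ≤ ‖e n‖ ∧ ‖e n‖ ≤ c₂ ∧ c₁ ≤ ‖f n‖ ∧ ‖f n‖ ≤ c₂)
    (hbi : ∀ i j, f i (e j) = if i = j then (1:ℝ) else 0)
    (hexp : ∀ x : X, Tendsto (fun m => ∑ i ∈ Finset.range m, f i x • e i) atTop (nhds x))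
    (w : ℕ → ℝ) (hw : ∀ n, 0 < w n)
    (Ca : ℝ) (hCa : 1 ≤ Ca)
    (hA : ∀ (x : X) (A B : Finset ℕ) (ε η : ℕ → ℝ) (t : ℝ),
      (∀ n, ε n = 1 ∨ ε n = -1) → (∀ n, η n = 1 ∨ η n = -1) →
      ∑ n ∈ A, w n ≤ ∑ n ∈ B, w n → Disjoint A B →
      (∀ n ∈ A ∪ B, f n x = 0) → (∀ j, |f j x| ≤ t) →
      ‖x + ∑ n ∈ A, (t * ε n) • e n‖ ≤ Ca * ‖x + ∑ n ∈ B, (t * η n) • e n‖) :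
    ∀ (A B : Finset ℕ) (ε η : ℕ → ℝ),
      (∀ n, ε n = 1 ∨ ε n = -1) → (∀ n, η n = 1 ∨ η n = -1) →
      ∑ n ∈ A, w n ≤ ∑ n ∈ B, w n →
      ‖∑ n ∈ A, ε n • e n‖ ≤ (2 * Ca) * ‖∑ n ∈ B, η n • e n‖ := by
  intro A B ε η hε hη hwAB
  classical
  have hfsum : ∀ (S : Finset ℕ) (c : ℕ → ℝ) (j : ℕ),
      f j (∑ m ∈ S, c m • e m) = if j ∈ S then c j else 0 := by
    intro S c j
    rw [map_sum]
    have h : ∀ m ∈ S, f j (c m • e m) = if j = m then c m else 0 := by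
      intro m _
      rw [map_smul, hbi]
      by_cases h : j = m <;> simp [h]
    rw [Finset.sum_congr rfl h, Finset.sum_ite_eq]
  set Dp := (A ∩ B).filter (fun n => ε n = η n) with hDpdef
  set Dm := (A ∩ B).filter (fun n => ¬ ε n = η n) with hDmdef
  set x₁ := ∑ n ∈ Dp, η n • e n with hx₁
  set x₂ := ∑ n ∈ Dm, η n • e n with hx₂
  have hDpAB : Dp ⊆ A ∩ B := Finset.filter_subset _ _
  have hDmAB : Dm ⊆ A ∩ B := Finset.filter_subset _ _
  have hDpB : Dp ⊆ B := hDpAB.trans Finset.inter_subset_right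
  have hDmB : Dm ⊆ B := hDmAB.trans Finset.inter_subset_right
  -- first application of Property (A)
  have h1 : ‖x₁ + ∑ n ∈ A \ B, ((1:ℝ) * ε n) • e n‖ ≤
      Ca * ‖x₁ + ∑ n ∈ B \ Dp, ((1:ℝ) * η n) • e n‖ := by
    apply hA x₁ (A \ B) (B \ Dp) ε η 1 hε hη
    · -- weights
      have e1 : ∑ n ∈ A \ (A ∩ B), w n + ∑ n ∈ A ∩ B, w n = ∑ n ∈ A, w n :=
        Finset.sum_sdiff Finset.inter_subset_left
      have e2 : ∑ n ∈ B \ Dp, w n + ∑ n ∈ Dp, w n = ∑ n ∈ B, w n :=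
        Finset.sum_sdiff hDpB
      have e3 : A \ (A ∩ B) = A \ B := Finset.sdiff_inter_self_left A B
      have e4 : ∑ n ∈ Dp, w n ≤ ∑ n ∈ A ∩ B, w n :=
        Finset.sum_le_sum_of_subset_of_nonneg hDpAB (fun n _ _ => (hw n).le)
      rw [e3] at e1
      linarith
    · rw [Finset.disjoint_left]
      intro n hn hn'
      exact (Finset.mem_sdiff.1 hn).2 (Finset.mem_sdiff.1 hn').1
    · intro n hn
      rw [hx₁, hfsum]
      rw [if_neg]
      intro hnDp
      rcases Finset.mem_union.1 hn with h | h
      · exact (Finset.mem_sdiff.1 h).2 (hDpB hnDp)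
      · exact (Finset.mem_sdiff.1 h).2 hnDp
    · intro j
      rw [hx₁, hfsum]
      split
      · rcases hη j with h | h <;> rw [h] <;> norm_num
      · norm_num
  -- second application of Property (A)
  have h2 : ‖x₂ + ∑ n ∈ (∅ : Finset ℕ), ((1:ℝ) * η n) • e n‖ ≤
      Ca * ‖x₂ + ∑ n ∈ B \ Dm, ((1:ℝ) * η n) • e n‖ := by
    apply hA x₂ ∅ (B \ Dm) η η 1 hη hη
    · simp only [Finset.sum_empty]
      exact Finset.sum_nonneg (fun n _ => (hw n).le)
    · exact Finset.disjoint_empty_left _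
    · intro n hn
      rw [hx₂, hfsum, if_neg]
      intro hnDm
      rcases Finset.mem_union.1 hn with h | h
      · exact absurd h (Finset.notMem_empty n)
      · exact (Finset.mem_sdiff.1 h).2 hnDm
    · intro j
      rw [hx₂, hfsum]
      split
      · rcases hη j with h | h <;> rw [h] <;> norm_num
      · norm_num
  -- rewrite the RHS norms as ‖1_{ηB}‖
  have hRHS1 : x₁ + ∑ n ∈ B \ Dp, ((1:ℝ) * η n) • e n = ∑ n ∈ B, η n • e n := by
    simp only [one_mul, hx₁]
    rw [add_comm]
    exact Finset.sum_sdiff hDpB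
  have hRHS2 : x₂ + ∑ n ∈ B \ Dm, ((1:ℝ) * η n) • e n = ∑ n ∈ B, η n • e n := by
    simp only [one_mul, hx₂]
    rw [add_comm]
    exact Finset.sum_sdiff hDmB
  rw [hRHS1] at h1
  rw [hRHS2] at h2
  simp only [Finset.sum_empty, add_zero] at h2
  -- decomposition of 1_{εA}
  have hdec : ∑ n ∈ A, ε n • e n
      = (x₁ + ∑ n ∈ A \ B, ((1:ℝ) * ε n) • e n) - x₂ := by
    have e3 : A \ (A ∩ B) = A \ B := Finset.sdiff_inter_self_left A B
    have e1 : ∑ n ∈ A \ B, ε n • e n + ∑ n ∈ A ∩ B, ε n • e n = ∑ n ∈ A, ε n • e n := by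
      rw [← e3]; exact Finset.sum_sdiff Finset.inter_subset_left
    have e2 : ∑ n ∈ Dp, ε n • e n + ∑ n ∈ Dm, ε n • e n = ∑ n ∈ A ∩ B, ε n • e n :=
      Finset.sum_filter_add_sum_filter_not (A ∩ B) (fun n => ε n = η n) _
    have ep : ∑ n ∈ Dp, ε n • e n = x₁ := by
      apply Finset.sum_congr rfl
      intro n hn
      rw [(Finset.mem_filter.1 hn).2]
    have em : ∑ n ∈ Dm, ε n • e n = -x₂ := by
      rw [hx₂, ← Finset.sum_neg_distrib]
      apply Finset.sum_congr rfl
      intro n hn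
      have hne := (Finset.mem_filter.1 hn).2
      have : ε n = -η n := by
        rcases hε n with h | h <;> rcases hη n with h' | h' <;>
          simp [h, h'] at hne ⊢ <;> exact hne (h.trans h'.symm)
      rw [this, neg_smul]
    simp only [one_mul]
    rw [← e1, ← e2, ep, em]
    abel
  rw [hdec]
  calc ‖(x₁ + ∑ n ∈ A \ B, ((1:ℝ) * ε n) • e n) - x₂‖
      ≤ ‖x₁ + ∑ n ∈ A \ B, ((1:ℝ) * ε n) • e n‖ + ‖x₂‖ := norm_sub_le _ _
    _ ≤ Ca * ‖∑ n ∈ B, η n • e n‖ + Ca * ‖∑ n ∈ B, η n • e n‖ := add_le_add h1 h2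
    _ = (2 * Ca) * ‖∑ n ∈ B, η n • e n‖ := by ring
end

section
/- If a semi-normalized Schauder basis is C_s-w-superdemocratic and satisfies Property (C) with constant C_u, then it has the w-Property (A) with constant at most 3·C_u·C_s. -/
open Filter

theorem stmt11 {X : Type*} [NormedAddCommGroup X] [NormedSpace ℝ X] [CompleteSpace X]
    (e : ℕ → X) (f : ℕ → X →L[ℝ] ℝ) (c₁ c₂ : ℝ) (hc₁ : 0 < c₁)
    (hsn : ∀ n, c₁ ≤ ‖e n‖ ∧ ‖e n‖ ≤ c₂ ∧ c₁ ≤ ‖f n‖ ∧ ‖f n‖ ≤ c₂)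
    (hbi : ∀ i j, f i (e j) = if i = j then (1:ℝ) else 0)
    (hexp : ∀ x : X, Tendsto (fun m => ∑ i ∈ Finset.range m, f i x • e i) atTop (nhds x))
    (w : ℕ → ℝ) (hw : ∀ n, 0 < w n)
    (Cs Cu : ℝ) (hCs : 1 ≤ Cs) (hCu : 1 ≤ Cu)
    (hsd : ∀ (A B : Finset ℕ) (ε η : ℕ → ℝ),
      (∀ n, ε n = 1 ∨ ε n = -1) → (∀ n, η n = 1 ∨ η n = -1) →
      ∑ n ∈ A, w n ≤ ∑ n ∈ B, w n →
      ‖∑ n ∈ A, ε n • e n‖ ≤ Cs * ‖∑ n ∈ B, η n • e n‖)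
    (hC : ∀ (x : X) (Λ : Finset ℕ),
      (∀ k ∈ Λ, ∀ j ∉ Λ, |f j x| ≤ |f k x|) →
      ∀ (ε : ℕ → ℝ), (∀ n, ε n = 1 ∨ ε n = -1) →
      ∀ t : ℝ, 0 ≤ t → (∀ j ∈ Λ, t ≤ |f j x|) →
      t * ‖∑ j ∈ Λ, ε j • e j‖ ≤ Cu * ‖x‖) :
    ∀ (x : X) (A B : Finset ℕ) (ε η : ℕ → ℝ) (t : ℝ),
      (∀ n, ε n = 1 ∨ ε n = -1) → (∀ n, η n = 1 ∨ η n = -1) →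
      ∑ n ∈ A, w n ≤ ∑ n ∈ B, w n → Disjoint A B →
      (∀ n ∈ A ∪ B, f n x = 0) → (∀ j, |f j x| ≤ t) →
      ‖x + ∑ n ∈ A, (t * ε n) • e n‖ ≤ (3 * Cu * Cs) * ‖x + ∑ n ∈ B, (t * η n) • e n‖ := by

  intro x A B ε η t hε hη hwAB hAB hsupp ht
  have ht0 : 0 ≤ t := le_trans (abs_nonneg _) (ht 0)
  set y := x + ∑ n ∈ B, (t * η n) • e n with hy
  have hfy : ∀ j, f j y = f j x + (if j ∈ B then t * η j else 0) := by
    intro j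
    simp only [hy, map_add, map_sum, map_smul, smul_eq_mul, hbi]
    congr 1
    simp [mul_ite, Finset.sum_ite_eq]
  have habs : ∀ j ∈ B, |f j y| = t := by
    intro j hj
    rw [hfy j, hsupp j (Finset.mem_union_right _ hj), if_pos hj, zero_add, abs_mul]
    rcases hη j with h | h <;> simp [h, abs_of_nonneg ht0]
  have hgreedy : ∀ k ∈ B, ∀ j ∉ B, |f j y| ≤ |f k y| := by
    intro k hk j hj
    rw [habs k hk, hfy j, if_neg hj, add_zero]
    exact ht j
  have h1 : t * ‖∑ j ∈ B, η j • e j‖ ≤ Cu * ‖y‖ :=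
    hC y B hgreedy η hη t ht0 (fun j hj => (habs j hj).ge)
  have h2 : ‖∑ n ∈ A, ε n • e n‖ ≤ Cs * ‖∑ n ∈ B, η n • e n‖ := hsd A B ε η hε hη hwAB
  have hsA : ∑ n ∈ A, (t * ε n) • e n = t • ∑ n ∈ A, ε n • e n := by
    rw [Finset.smul_sum]; simp [smul_smul]
  have hsB : ∑ n ∈ B, (t * η n) • e n = t • ∑ n ∈ B, η n • e n := by
    rw [Finset.smul_sum]; simp [smul_smul]
  have hnA : ‖∑ n ∈ A, (t * ε n) • e n‖ = t * ‖∑ n ∈ A, ε n • e n‖ := by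
    rw [hsA, norm_smul, Real.norm_of_nonneg ht0]
  have hnB : ‖∑ n ∈ B, (t * η n) • e n‖ = t * ‖∑ n ∈ B, η n • e n‖ := by
    rw [hsB, norm_smul, Real.norm_of_nonneg ht0]
  have hxle : ‖x‖ ≤ (1 + Cu) * ‖y‖ := by
    have : x = y - ∑ n ∈ B, (t * η n) • e n := by rw [hy]; abel
    calc ‖x‖ ≤ ‖y‖ + ‖∑ n ∈ B, (t * η n) • e n‖ := by rw [this]; exact norm_sub_le _ _
      _ ≤ ‖y‖ + Cu * ‖y‖ := by rw [hnB]; linarith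
      _ = (1 + Cu) * ‖y‖ := by ring
  have htA : t * ‖∑ n ∈ A, ε n • e n‖ ≤ Cs * (Cu * ‖y‖) := by
    calc t * ‖∑ n ∈ A, ε n • e n‖ ≤ t * (Cs * ‖∑ n ∈ B, η n • e n‖) := by
          exact mul_le_mul_of_nonneg_left h2 ht0
      _ = Cs * (t * ‖∑ n ∈ B, η n • e n‖) := by ring
      _ ≤ Cs * (Cu * ‖y‖) := mul_le_mul_of_nonneg_left h1 (by linarith)
  have hyn : (0:ℝ) ≤ ‖y‖ := norm_nonneg _
  calc ‖x + ∑ n ∈ A, (t * ε n) • e n‖ ≤ ‖x‖ + ‖∑ n ∈ A, (t * ε n) • e n‖ := norm_add_le _ _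
    _ = ‖x‖ + t * ‖∑ n ∈ A, ε n • e n‖ := by rw [hnA]
    _ ≤ (1 + Cu) * ‖y‖ + Cs * (Cu * ‖y‖) := by linarith
    _ ≤ (3 * Cu * Cs) * ‖y‖ := by
        nlinarith [mul_nonneg hyn (mul_nonneg (by linarith : (0:ℝ) ≤ Cu) (by linarith : (0:ℝ) ≤ Cs - 1)),
          mul_nonneg hyn (mul_nonneg (by linarith : (0:ℝ) ≤ Cu - 1) (by linarith : (0:ℝ) ≤ Cs)),
          mul_nonneg hyn (by linarith : (0:ℝ) ≤ Cs - 1)]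
end

section
/- Every bidemocratic semi-normalized basis satisfies Property (C): there is a constant such that for every x ∈ X, every finite A ⊂ supp(x), and every sign choice ε, min_{j∈A}|e_j*(x)|·‖1_{εA}‖ ≤ C‖x‖. -/
open Filter

/-!
Choose signs `η j = ±1` with `η j * e_j*(x) = |e_j*(x)|`. Then
`t * |A| ≤ ∑_{j ∈ A} |e_j*(x)| = 1_{ηA}*(x) ≤ ‖1_{ηA}*‖ * ‖x‖`, and multiplying by `‖1_{εA}‖`,
bidemocracy gives `t * ‖1_{εA}‖ * |A| ≤ C_b * |A| * ‖x‖`.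
-/

/-- Unlike `Real.sign a`, never `0`, hence an admissible sign choice. -/
noncomputable def signOrOne (a : ℝ) : ℝ := if a < 0 then -1 else 1

lemma signOrOne_eq_one_or_neg_one (a : ℝ) : signOrOne a = 1 ∨ signOrOne a = -1 := by
  unfold signOrOne
  split_ifs <;> simp

lemma signOrOne_mul_self (a : ℝ) : signOrOne a * a = |a| := by
  unfold signOrOne
  split_ifs with h
  · rw [abs_of_neg h]; ring
  · rw [abs_of_nonneg (not_lt.mp h)]; ring

section

variable {ι X : Type*} [NormedAddCommGroup X] [NormedSpace ℝ X]

lemma sum_abs_apply_le_norm_mul_norm (f : ι → X →L[ℝ] ℝ) (A : Finset ι) (x : X) :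
    ∑ j ∈ A, |f j x| ≤ ‖∑ j ∈ A, signOrOne (f j x) • f j‖ * ‖x‖ := by
  calc ∑ j ∈ A, |f j x| = (∑ j ∈ A, signOrOne (f j x) • f j) x := by
        simp only [FunLike.coe_sum, Finset.sum_apply, FunLike.coe_smul, Pi.smul_apply, smul_eq_mul,
          signOrOne_mul_self]
    _ ≤ ‖∑ j ∈ A, signOrOne (f j x) • f j‖ * ‖x‖ :=
        (Real.le_norm_self _).trans (ContinuousLinearMap.le_opNorm _ x)

def IsBidemocratic (e : ι → X) (f : ι → X →L[ℝ] ℝ) (Cb : ℝ) : Prop :=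
  ∀ (A : Finset ι) (ε η : ι → ℝ), (∀ n, ε n = 1 ∨ ε n = -1) → (∀ n, η n = 1 ∨ η n = -1) →
    ‖∑ i ∈ A, ε i • e i‖ * ‖∑ i ∈ A, η i • f i‖ ≤ Cb * A.card

namespace IsBidemocratic

variable {e : ι → X} {f : ι → X →L[ℝ] ℝ} {Cb : ℝ}

lemma nonneg [Nonempty ι] (h : IsBidemocratic e f Cb) : 0 ≤ Cb := by
  have := h {Classical.arbitrary ι} 1 1 (fun _ => .inl rfl) (fun _ => .inl rfl)
  rw [Finset.card_singleton, Nat.cast_one, mul_one] at this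
  exact (mul_nonneg (norm_nonneg _) (norm_nonneg _)).trans this

lemma mul_norm_sum_smul_le [Nonempty ι] (h : IsBidemocratic e f Cb) (x : X) {A : Finset ι}
    {ε : ι → ℝ} (hε : ∀ n, ε n = 1 ∨ ε n = -1) {t : ℝ} (ht : ∀ j ∈ A, t ≤ |f j x|) :
    t * ‖∑ j ∈ A, ε j • e j‖ ≤ Cb * ‖x‖ := by
  rcases A.eq_empty_or_nonempty with rfl | hA
  · simpa using mul_nonneg h.nonneg (norm_nonneg x)
  set u := ‖∑ j ∈ A, ε j • e j‖
  set φ := ‖∑ j ∈ A, signOrOne (f j x) • f j‖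
  have hcard : (0 : ℝ) < A.card := by exact_mod_cast hA.card_pos
  have hlower : t * A.card ≤ φ * ‖x‖ := by
    calc t * A.card = ∑ _j ∈ A, t := by rw [Finset.sum_const, nsmul_eq_mul, mul_comm]
      _ ≤ ∑ j ∈ A, |f j x| := Finset.sum_le_sum ht
      _ ≤ φ * ‖x‖ := sum_abs_apply_le_norm_mul_norm f A x
  have hbd : u * φ ≤ Cb * A.card := h A ε _ hε fun n => signOrOne_eq_one_or_neg_one _
  refine le_of_mul_le_mul_right ?_ hcard
  calc t * u * A.card = u * (t * A.card) := by ring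
    _ ≤ u * (φ * ‖x‖) := mul_le_mul_of_nonneg_left hlower (norm_nonneg _)
    _ = u * φ * ‖x‖ := by ring
    _ ≤ Cb * A.card * ‖x‖ := mul_le_mul_of_nonneg_right hbd (norm_nonneg x)
    _ = Cb * ‖x‖ * A.card := by ring

end IsBidemocratic

end

theorem stmt12_general {X : Type*} [NormedAddCommGroup X] [NormedSpace ℝ X]
    (e : ℕ → X) (f : ℕ → X →L[ℝ] ℝ)
    (Cb : ℝ)
    (hbd : ∀ (A : Finset ℕ) (ε η : ℕ → ℝ),
      (∀ n, ε n = 1 ∨ ε n = -1) → (∀ n, η n = 1 ∨ η n = -1) →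
      ‖∑ i ∈ A, ε i • e i‖ * ‖∑ i ∈ A, η i • f i‖ ≤ Cb * A.card) :
    ∃ C : ℝ, ∀ (x : X) (A : Finset ℕ), (∀ n ∈ A, f n x ≠ 0) →
      ∀ (ε : ℕ → ℝ), (∀ n, ε n = 1 ∨ ε n = -1) →
      ∀ t : ℝ, 0 ≤ t → (∀ j ∈ A, t ≤ |f j x|) →
      t * ‖∑ j ∈ A, ε j • e j‖ ≤ C * ‖x‖ :=
  ⟨Cb, fun x _ _ _ hε _ _ ht => IsBidemocratic.mul_norm_sum_smul_le hbd x hε ht⟩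

theorem stmt12 {X : Type*} [NormedAddCommGroup X] [NormedSpace ℝ X] [CompleteSpace X]
    (e : ℕ → X) (f : ℕ → X →L[ℝ] ℝ) (c₁ c₂ : ℝ) (hc₁ : 0 < c₁)
    (hsn : ∀ n, c₁ ≤ ‖e n‖ ∧ ‖e n‖ ≤ c₂ ∧ c₁ ≤ ‖f n‖ ∧ ‖f n‖ ≤ c₂)
    (hbi : ∀ i j, f i (e j) = if i = j then (1:ℝ) else 0)
    (hexp : ∀ x : X, Tendsto (fun m => ∑ i ∈ Finset.range m, f i x • e i) atTop (nhds x))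
    (Cb : ℝ) (hCb : 1 ≤ Cb)
    (hbd : ∀ (A : Finset ℕ) (ε η : ℕ → ℝ),
      (∀ n, ε n = 1 ∨ ε n = -1) → (∀ n, η n = 1 ∨ η n = -1) →
      ‖∑ i ∈ A, ε i • e i‖ * ‖∑ i ∈ A, η i • f i‖ ≤ Cb * A.card) :
    ∃ C : ℝ, ∀ (x : X) (A : Finset ℕ), (∀ n ∈ A, f n x ≠ 0) →
      ∀ (ε : ℕ → ℝ), (∀ n, ε n = 1 ∨ ε n = -1) →
      ∀ t : ℝ, 0 ≤ t → (∀ j ∈ A, t ≤ |f j x|) →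
      t * ‖∑ j ∈ A, ε j • e j‖ ≤ C * ‖x‖ :=
  stmt12_general e f Cb hbd
end

section
/- Let X = ℓ_1 ⊕ c_0 with norm ‖(x,y)‖ = ‖x‖_{ℓ1} + ‖y‖_∞, and define E_{2n−1} = (½e_n, −½f_n), E_{2n} = (¼e_n, ¾f_n), where (e_n), (f_n) are the canonical bases of ℓ_1 and c_0. Then for every finite set A ⊂ ℕ and every sign choice ε, ‖Σ_{i∈A} ε_i E_i‖ ≥ |A|/8. -/
/-- The norm of ℓ₁ ⊕₁ c₀ on pairs of (finitely supported) sequences: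
`‖(x, y)‖ = ‖x‖_{ℓ₁} + ‖y‖_∞`. -/
noncomputable def prodNorm (z : (ℕ → ℝ) × (ℕ → ℝ)) : ℝ :=
  (∑' m, |z.1 m|) + ⨆ m, |z.2 m|

/-- `EE (2n-1) = (½ eₙ, -½ fₙ)` and `EE (2n) = (¼ eₙ, ¾ fₙ)`, where `(eₙ)`, `(fₙ)`
are the canonical bases of ℓ₁ and c₀. -/
noncomputable def EE : ℕ → (ℕ → ℝ) × (ℕ → ℝ) := fun k =>
  if k % 2 = 1 then
    ((fun m => if m = (k + 1) / 2 then (1:ℝ)/2 else 0),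
     (fun m => if m = (k + 1) / 2 then -(1/2 : ℝ) else 0))
  else
    ((fun m => if m = k / 2 then (1:ℝ)/4 else 0),
     (fun m => if m = k / 2 then (3/4 : ℝ) else 0))

lemma EE_fst_zero (i b : ℕ) (h : (i + 1) / 2 ≠ b) : (EE i).1 b = 0 := by
  by_cases hp : i % 2 = 1
  · simp only [EE, if_pos hp]
    have : b ≠ (i + 1) / 2 := fun hb => h hb.symm
    simp [this]
  · simp only [EE, if_neg hp]
    have : b ≠ i / 2 := by omega
    simp [this]

lemma EE_fst_odd (m : ℕ) (hm : 1 ≤ m) : (EE (2 * m - 1)).1 m = 1 / 2 := by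
  have h1 : (2 * m - 1) % 2 = 1 := by omega
  have h2 : m = (2 * m - 1 + 1) / 2 := by omega
  simp only [EE, if_pos h1]
  simp [← h2]

lemma EE_fst_even (m : ℕ) : (EE (2 * m)).1 m = 1 / 4 := by
  have h1 : ¬ (2 * m) % 2 = 1 := by omega
  have h2 : m = (2 * m) / 2 := by omega
  simp only [EE, if_neg h1]
  simp [← h2]

lemma aux2 (a b : ℝ) (ha : a = 1 ∨ a = -1) (hb : b = 1 ∨ b = -1) :
    (2 : ℝ) / 8 ≤ |a * (1 / 2) + b * (1 / 4)| := by
  rcases abs_cases (a * (1 / 2) + b * (1 / 4)) with ⟨h, h'⟩ | ⟨h, h'⟩ <;>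
    rcases ha with rfl | rfl <;> rcases hb with rfl | rfl <;> linarith

lemma aux1 (a c : ℝ) (ha : a = 1 ∨ a = -1) (hc : c = 1 / 2 ∨ c = 1 / 4) :
    (1 : ℝ) / 8 ≤ |a * c| := by
  rcases abs_cases (a * c) with ⟨h, h'⟩ | ⟨h, h'⟩ <;>
    rcases ha with rfl | rfl <;> rcases hc with rfl | rfl <;> linarith

theorem stmt13 (A : Finset ℕ) (hA : ∀ k ∈ A, 1 ≤ k)
    (ε : ℕ → ℝ) (hε : ∀ n, ε n = 1 ∨ ε n = -1) :
    (A.card : ℝ) / 8 ≤ prodNorm (∑ i ∈ A, ε i • EE i) := by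
  classical
  set f : ℕ → ℝ := fun m => ∑ i ∈ A, ε i * (EE i).1 m with hf
  set N : Finset ℕ := A.image (fun i => (i + 1) / 2) with hN
  -- the first component of the sum is f
  have hfst : ∀ m, (∑ i ∈ A, ε i • EE i).1 m = f m := by
    intro m
    rw [hf]
    simp [Prod.fst_sum, Finset.sum_apply]
  -- key per-coordinate bound
  have key : ∀ m ∈ N, ((A.filter fun i => (i + 1) / 2 = m).card : ℝ) / 8 ≤ |f m| := by
    intro m hmN
    obtain ⟨i0, hi0A, hi0⟩ := Finset.mem_image.mp hmN
    have hi01 : 1 ≤ i0 := hA i0 hi0A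
    have hm1 : 1 ≤ m := by omega
    set F := A.filter (fun i => (i + 1) / 2 = m) with hF
    have hfm : f m = ∑ i ∈ F, ε i * (EE i).1 m := by
      rw [hf, hF]
      exact (Finset.sum_filter_of_ne (fun i _ hne => by
        by_contra h
        exact hne (by rw [EE_fst_zero i m h, mul_zero]))).symm
    have hsub : ∀ i ∈ F, i = 2 * m - 1 ∨ i = 2 * m := by
      intro i hi
      rw [hF, Finset.mem_filter] at hi
      have := hA i hi.1
      omega
    have hne : 2 * m - 1 ≠ 2 * m := by omega
    by_cases h1 : 2 * m - 1 ∈ A <;> by_cases h2 : 2 * m ∈ A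
    · have hFe : F = {2 * m - 1, 2 * m} := by
        ext i
        simp only [hF, Finset.mem_filter, Finset.mem_insert, Finset.mem_singleton]
        constructor
        · intro ⟨hiA, hie⟩
          have := hA i hiA; omega
        · rintro (rfl | rfl)
          · exact ⟨h1, by omega⟩
          · exact ⟨h2, by omega⟩
      rw [hfm, hFe, Finset.sum_pair hne, Finset.card_pair hne,
        EE_fst_odd m hm1, EE_fst_even m]
      push_cast
      linarith [aux2 (ε (2 * m - 1)) (ε (2 * m)) (hε _) (hε _)]
    · have hFe : F = {2 * m - 1} := by
        ext i
        simp only [hF, Finset.mem_filter, Finset.mem_singleton]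
        constructor
        · intro ⟨hiA, hie⟩
          rcases hsub i (by rw [hF, Finset.mem_filter]; exact ⟨hiA, hie⟩) with h | h
          · exact h
          · exact absurd (h ▸ hiA) h2
        · rintro rfl
          exact ⟨h1, by omega⟩
      rw [hfm, hFe, Finset.sum_singleton, Finset.card_singleton,
        EE_fst_odd m hm1]
      push_cast
      linarith [aux1 (ε (2 * m - 1)) (1 / 2) (hε _) (Or.inl rfl)]
    · have hFe : F = {2 * m} := by
        ext i
        simp only [hF, Finset.mem_filter, Finset.mem_singleton]
        constructor
        · intro ⟨hiA, hie⟩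
          rcases hsub i (by rw [hF, Finset.mem_filter]; exact ⟨hiA, hie⟩) with h | h
          · exact absurd (h ▸ hiA) h1
          · exact h
        · rintro rfl
          exact ⟨h2, by omega⟩
      rw [hfm, hFe, Finset.sum_singleton, Finset.card_singleton,
        EE_fst_even m]
      push_cast
      linarith [aux1 (ε (2 * m)) (1 / 4) (hε _) (Or.inr rfl)]
    · exfalso
      rcases hsub i0 (by rw [hF, Finset.mem_filter]; exact ⟨hi0A, hi0⟩) with h | h
      · exact h1 (h ▸ hi0A)
      · exact h2 (h ▸ hi0A)
  -- summability of |f|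
  have hzero : ∀ b ∉ N, |f b| = 0 := by
    intro b hb
    have : f b = 0 := by
      rw [hf]
      apply Finset.sum_eq_zero
      intro i hi
      have : (i + 1) / 2 ≠ b := fun h => hb (Finset.mem_image.mpr ⟨i, hi, h⟩)
      rw [EE_fst_zero i b this, mul_zero]
    rw [this, abs_zero]
  have hSummable : Summable (fun m => |f m|) := summable_of_ne_finset_zero hzero
  have htsum : ∑ m ∈ N, |f m| ≤ ∑' m, |f m| :=
    Summable.sum_le_tsum N (fun _ _ => abs_nonneg _) hSummable
  have hcard : A.card = ∑ m ∈ N, (A.filter fun i => (i + 1) / 2 = m).card :=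
    Finset.card_eq_sum_card_image _ A
  have hsum : (A.card : ℝ) / 8 ≤ ∑ m ∈ N, |f m| := by
    rw [hcard]
    push_cast
    rw [Finset.sum_div]
    exact Finset.sum_le_sum key
  have hsup : 0 ≤ ⨆ m, |(∑ i ∈ A, ε i • EE i).2 m| :=
    Real.iSup_nonneg fun m => abs_nonneg _
  have heq : (∑' m, |(∑ i ∈ A, ε i • EE i).1 m|) = ∑' m, |f m| := by
    congr 1
    funext m
    rw [hfst m]
  rw [prodNorm, heq]
  linarith
end

section
/- With X = ℓ_1 ⊕_1 c_0 and E_{2n−1} = (½e_n, −½f_n), E_{2n} = (¼e_n, ¾f_n) as above, the sequence (E_n) fails Property (D): for z_N = Σ_{n=1}^N 2E_{2n} − Σ_{n=1}^N E_{2n−1}, one has ‖z_N‖ = 2 while min coefficient modulus equals 1 and ‖Σ_{n=1}^{2N} E_n‖ = (3N+1)/4; hence the ratio min|a_i|·‖1_A‖ / ‖Σ a_i E_i‖ = (3N+1)/8 → ∞. -/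
lemma term_eq (n : ℕ) (hn : 1 ≤ n) :
    (2:ℝ) • EE (2*n) - EE (2*n - 1) =
      ((fun _ => (0:ℝ)), (fun m => if m = n then (2:ℝ) else 0)) := by
  have h1 : (2*n) % 2 = 0 := by omega
  have h2 : (2*n) / 2 = n := by omega
  have h3 : (2*n - 1) % 2 = 1 := by omega
  have h4 : (2*n - 1 + 1) / 2 = n := by omega
  simp only [EE, h1, h2, h3, h4]
  norm_num
  constructor <;> funext m <;> simp [Pi.smul_apply] <;> split_ifs <;> norm_num

lemma zsum_eq (N : ℕ) :
    (∑ n ∈ Finset.Icc 1 N, ((2:ℝ) • EE (2*n) - EE (2*n - 1))) =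
      ((fun _ => (0:ℝ)), fun m => if m ∈ Finset.Icc 1 N then (2:ℝ) else 0) := by
  rw [Finset.sum_congr rfl (fun n hn => term_eq n (Finset.mem_Icc.mp hn).1)]
  apply Prod.ext
  · rw [Prod.fst_sum]; funext m; rw [Finset.sum_apply]; simp
  · rw [Prod.snd_sum]; funext m
    rw [Finset.sum_apply]
    simp [Finset.sum_ite_eq]

lemma pair_sum (N : ℕ) :
    (∑ i ∈ Finset.Icc 1 (2*N), EE i) =
      ((fun m => if m ∈ Finset.Icc 1 N then (3/4:ℝ) else 0),
       (fun m => if m ∈ Finset.Icc 1 N then (1/4:ℝ) else 0)) := by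
  induction N with
  | zero => norm_num; rfl
  | succ N ih =>
    have h : 2*(N+1) = (2*N+1)+1 := by ring
    rw [h, Finset.sum_Icc_succ_top (by omega), Finset.sum_Icc_succ_top (by omega), ih]
    have e1 : EE (2*N+1) =
        ((fun m => if m = N+1 then (1/2:ℝ) else 0),
         (fun m => if m = N+1 then (-(1/2):ℝ) else 0)) := by
      have h1 : (2*N+1) % 2 = 1 := by omega
      have h2 : (2*N+1+1)/2 = N+1 := by omega
      simp [EE, h1, h2]
    have e2 : EE (2*N+1+1) =
        ((fun m => if m = N+1 then (1/4:ℝ) else 0),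
         (fun m => if m = N+1 then (3/4:ℝ) else 0)) := by
      have h1 : (2*N+1+1) % 2 = 0 := by omega
      have h2 : (2*N+1+1)/2 = N+1 := by omega
      simp [EE, h1, h2]
    rw [e1, e2]
    apply Prod.ext <;> funext m <;>
      simp only [Prod.fst_add, Prod.snd_add, Pi.add_apply, Finset.mem_Icc] <;>
      rcases eq_or_ne m (N+1) with h | h <;> simp [h] <;> (try split_ifs) <;> (try norm_num) <;> omega

lemma supIndD14 (N : ℕ) (hN : 1 ≤ N) (c : ℝ) (hc : 0 ≤ c) :
    (⨆ m, |if m ∈ Finset.Icc 1 N then c else 0|) = c := by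
  have hb : BddAbove (Set.range fun m : ℕ => |if m ∈ Finset.Icc 1 N then c else 0|) := by
    refine ⟨c, ?_⟩
    rintro x ⟨m, rfl⟩
    by_cases h : m ∈ Finset.Icc 1 N <;> simp [h, abs_of_nonneg hc, hc]
  apply le_antisymm
  · exact ciSup_le fun m => by
      by_cases h : m ∈ Finset.Icc 1 N <;> simp [h, abs_of_nonneg hc, hc]
  · have h1 : (1:ℕ) ∈ Finset.Icc 1 N := by simp [hN]
    calc c = |if (1:ℕ) ∈ Finset.Icc 1 N then c else 0| := by
              rw [if_pos h1, abs_of_nonneg hc]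
    _ ≤ _ := le_ciSup hb 1

lemma tsumIndD14 (N : ℕ) (c : ℝ) (hc : 0 ≤ c) :
    (∑' m : ℕ, |if m ∈ Finset.Icc 1 N then c else 0|) = N * c := by
  rw [tsum_eq_sum (s := Finset.Icc 1 N) (f := fun m : ℕ => |if m ∈ Finset.Icc 1 N then c else 0|)
    (fun m hm => by simp [hm])]
  rw [Finset.sum_congr rfl (fun m hm => by rw [if_pos hm, abs_of_nonneg hc])]
  rw [Finset.sum_const, Nat.card_Icc, nsmul_eq_mul]
  simp

lemma norm1 (N : ℕ) (hN : 1 ≤ N) :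
    prodNorm (∑ n ∈ Finset.Icc 1 N, ((2:ℝ) • EE (2*n) - EE (2*n - 1))) = 2 := by
  rw [zsum_eq, prodNorm]
  simp only
  rw [supIndD14 N hN 2 (by norm_num)]
  simp

lemma norm2 (N : ℕ) (hN : 1 ≤ N) :
    prodNorm (∑ i ∈ Finset.Icc 1 (2*N), EE i) = (3 * N + 1) / 4 := by
  rw [pair_sum, prodNorm]
  simp only
  rw [tsumIndD14 N (3/4) (by norm_num), supIndD14 N hN (1/4) (by norm_num)]
  ring

theorem stmt14 :
    (∀ N : ℕ, 1 ≤ N →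
      prodNorm (∑ n ∈ Finset.Icc 1 N, ((2:ℝ) • EE (2*n) - EE (2*n - 1))) = 2 ∧
      prodNorm (∑ i ∈ Finset.Icc 1 (2*N), EE i) = (3 * N + 1) / 4) ∧
    Filter.Tendsto (fun N : ℕ =>
        prodNorm (∑ i ∈ Finset.Icc 1 (2*N), EE i) /
        prodNorm (∑ n ∈ Finset.Icc 1 N, ((2:ℝ) • EE (2*n) - EE (2*n - 1))))
      Filter.atTop Filter.atTop := by
  refine ⟨fun N hN => ⟨norm1 N hN, norm2 N hN⟩, ?_⟩
  have ht : Filter.Tendsto (fun N : ℕ => ((3*(N:ℝ)+1)/4)/2) Filter.atTop Filter.atTop := by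
    apply Filter.Tendsto.atTop_div_const (by norm_num : (0:ℝ) < 2)
    apply Filter.Tendsto.atTop_div_const (by norm_num : (0:ℝ) < 4)
    apply Filter.tendsto_atTop_add_const_right
    exact (tendsto_natCast_atTop_atTop (R := ℝ)).const_mul_atTop (by norm_num)
  apply ht.congr'
  filter_upwards [Filter.eventually_ge_atTop 1] with N hN
  rw [norm1 N hN, norm2 N hN]
end

section
/- Let S = {A ⊂ ℕ finite : |A| ≤ √(min A)} and the norm ‖(a_n)‖ = sup_{A∈S} Σ_{n∈A}|a_n| on c_{00}. For A_N = {N²+1, ..., N²+N} and B_N = {1, ..., N}, one has ‖1_{A_N}‖ = N and ‖1_{B_N}‖ ≤ √N. Hence the canonical basis is not democratic. -/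
/-- `F` is admissible for the (modified) Schreier space: `|F| ≤ √(min F)`. -/
def SchreierAdm (F : Finset ℕ) : Prop :=
  ∀ hF : F.Nonempty, (F.card : ℝ) ≤ Real.sqrt (F.min' hF)

/-- The norm of the indicator `1_C` in the (modified) Schreier space
`‖(aₙ)‖ = sup_{F ∈ S} ∑_{n ∈ F} |aₙ|`, namely `sup_{F ∈ S} |F ∩ C|`. -/
noncomputable def schreierNorm (C : Finset ℕ) : ℝ :=
  ⨆ F : {F : Finset ℕ // SchreierAdm F}, ((F.1 ∩ C).card : ℝ)

lemma adm_empty : SchreierAdm ∅ := fun hF => absurd hF (by simp)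

instance : Nonempty {F : Finset ℕ // SchreierAdm F} := ⟨⟨∅, adm_empty⟩⟩

lemma schreierNorm_le (C : Finset ℕ) (b : ℝ)
    (h : ∀ F, SchreierAdm F → ((F ∩ C).card : ℝ) ≤ b) : schreierNorm C ≤ b :=
  ciSup_le fun F => h F.1 F.2

lemma bdd (C : Finset ℕ) :
    BddAbove (Set.range fun F : {F : Finset ℕ // SchreierAdm F} => ((F.1 ∩ C).card : ℝ)) := by
  refine ⟨C.card, ?_⟩
  rintro x ⟨F, rfl⟩
  simp only []
  exact Nat.cast_le.mpr (Finset.card_le_card Finset.inter_subset_right)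

lemma le_schreierNorm (C F : Finset ℕ) (hF : SchreierAdm F) :
    ((F ∩ C).card : ℝ) ≤ schreierNorm C :=
  le_ciSup (bdd C) ⟨F, hF⟩

theorem stmt16 :
    (∀ N : ℕ, 1 ≤ N →
      schreierNorm (Finset.Icc (N^2 + 1) (N^2 + N)) = N ∧
      schreierNorm (Finset.Icc 1 N) ≤ Real.sqrt N) ∧
    ¬ ∃ C : ℝ, ∀ A B : Finset ℕ, A.card ≤ B.card →
      schreierNorm A ≤ C * schreierNorm B := by
  have key : ∀ N : ℕ, 1 ≤ N →
      schreierNorm (Finset.Icc (N^2 + 1) (N^2 + N)) = N ∧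
      schreierNorm (Finset.Icc 1 N) ≤ Real.sqrt N := by
    intro N hN
    have cardA : (Finset.Icc (N^2 + 1) (N^2 + N)).card = N := by
      rw [Nat.card_Icc]; omega
    have admA : SchreierAdm (Finset.Icc (N^2 + 1) (N^2 + N)) := by
      intro hF
      have hmin : N^2 + 1 ≤ (Finset.Icc (N^2 + 1) (N^2 + N)).min' hF :=
        (Finset.mem_Icc.mp (Finset.min'_mem _ hF)).1
      rw [cardA]
      have h1 : (N : ℝ) ≤ Real.sqrt (N^2 + 1) := by
        rw [Real.le_sqrt (by positivity)]
        · nlinarith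
        · positivity
      refine h1.trans (Real.sqrt_le_sqrt ?_)
      exact_mod_cast hmin
    constructor
    · apply le_antisymm
      · apply schreierNorm_le
        intro F _
        exact_mod_cast (Finset.card_le_card Finset.inter_subset_right).trans cardA.le
      · have := le_schreierNorm (Finset.Icc (N^2 + 1) (N^2 + N)) _ admA
        rwa [Finset.inter_self, cardA] at this
    · apply schreierNorm_le
      intro F hFa
      rcases Finset.eq_empty_or_nonempty (F ∩ Finset.Icc 1 N) with h | h
      · simp [h, Real.sqrt_nonneg]
      · obtain ⟨x, hx⟩ := h
        rw [Finset.mem_inter, Finset.mem_Icc] at hx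
        have hFne : F.Nonempty := ⟨x, hx.1⟩
        have h1 : ((F ∩ Finset.Icc 1 N).card : ℝ) ≤ F.card := by
          exact_mod_cast Finset.card_le_card Finset.inter_subset_left
        refine h1.trans ((hFa hFne).trans (Real.sqrt_le_sqrt ?_))
        have : F.min' hFne ≤ x := Finset.min'_le _ _ hx.1
        exact_mod_cast this.trans hx.2.2
  refine ⟨key, ?_⟩
  rintro ⟨C, hC⟩
  set N := Nat.ceil (C^2) + 1 with hNdef
  have hN1 : 1 ≤ N := le_add_self
  obtain ⟨hA, hB⟩ := key N hN1
  have hcard : (Finset.Icc (N^2 + 1) (N^2 + N)).card ≤ (Finset.Icc 1 N).card := by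
    rw [Nat.card_Icc, Nat.card_Icc]; omega
  have h := hC _ _ hcard
  rw [hA] at h
  have hBnn : 0 ≤ schreierNorm (Finset.Icc 1 N) := by
    have := le_schreierNorm (Finset.Icc 1 N) ∅ adm_empty
    simpa using this
  have hCN : (C : ℝ)^2 < N := by
    have : (C:ℝ)^2 ≤ Nat.ceil (C^2) := Nat.le_ceil _
    have h2 : (Nat.ceil (C^2) : ℝ) < N := by exact_mod_cast Nat.lt_succ_self _
    linarith
  have hs : Real.sqrt N ≤ Real.sqrt N := le_refl _
  have hfinal : (N : ℝ) ≤ C * Real.sqrt N := by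
    calc (N : ℝ) ≤ C * schreierNorm (Finset.Icc 1 N) := h
    _ ≤ C * Real.sqrt N := by
        rcases le_or_gt C 0 with hc | hc
        · nlinarith [Real.sqrt_nonneg (N:ℝ)]
        · exact mul_le_mul_of_nonneg_left hB hc.le
  have habs : C * Real.sqrt N < N := by
    have h1 : C ≤ |C| := le_abs_self C
    have h2 : |C| < Real.sqrt N := by
      rw [show |C| = Real.sqrt (C^2) by rw [Real.sqrt_sq_eq_abs]]
      exact Real.sqrt_lt_sqrt (by positivity) hCN
    have hsq : Real.sqrt N * Real.sqrt N = N := Real.mul_self_sqrt (by positivity)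
    nlinarith [Real.sqrt_nonneg (N:ℝ)]
  linarith
end

section
/- Fix 1 ≤ p < ∞ and a weight w ∈ c_0∖ℓ_1 with all w_n > 0. In the space with norm ‖(a_n)‖ = max( sup_n|a_n|, (Σ_n |a_n|^p w_n)^{1/p} ), the canonical basis satisfies the w-Property (A) with constant 1: if sup_j|a_j| ≤ 1, A, B finite disjoint sets disjoint from supp(a), and w(A) ≤ w(B), then ‖a + 1_{εA}‖ ≤ ‖a + 1_{ηB}‖ for all sign choices ε, η. -/
/-- The norm of the Rosenthal–Woo space `X_{∞,p,w^{1/p}}`: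
`‖(aₙ)‖ = max( sup_n |aₙ|, (∑ |aₙ|ᵖ wₙ)^{1/p} )`. -/
noncomputable def rwNorm (p : ℝ) (w : ℕ → ℝ) (x : ℕ → ℝ) : ℝ :=
  max (⨆ n, |x n|) ((∑' n, |x n| ^ p * w n) ^ (1 / p))

theorem stmt17 (p : ℝ) (hp : 1 ≤ p)
    (w : ℕ → ℝ) (hwpos : ∀ n, 0 < w n)
    (hw0 : Filter.Tendsto w Filter.atTop (nhds 0)) (hw1 : ¬ Summable w)
    (a : ℕ → ℝ) (ha : ∀ j, |a j| ≤ 1)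
    (hsum : Summable fun n => |a n| ^ p * w n)
    (A B : Finset ℕ) (hAB : Disjoint A B)
    (hsA : ∀ n ∈ A, a n = 0) (hsB : ∀ n ∈ B, a n = 0)
    (hwAB : ∑ n ∈ A, w n ≤ ∑ n ∈ B, w n)
    (ε η : ℕ → ℝ) (hε : ∀ n, ε n = 1 ∨ ε n = -1) (hη : ∀ n, η n = 1 ∨ η n = -1) :
    rwNorm p w (fun m => a m + if m ∈ A then ε m else 0) ≤
      rwNorm p w (fun m => a m + if m ∈ B then η m else 0) := by
  have hp0 : 0 < p := lt_of_lt_of_le one_pos hp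
  set xA := fun m => a m + if m ∈ A then ε m else 0 with hxA
  set xB := fun m => a m + if m ∈ B then η m else 0 with hxB
  have habsA : ∀ n, |xA n| = if n ∈ A then 1 else |a n| := by
    intro n; by_cases h : n ∈ A
    · rcases hε n with h1 | h1 <;> simp [hxA, h, hsA n h, h1]
    · simp [hxA, h]
  have habsB : ∀ n, |xB n| = if n ∈ B then 1 else |a n| := by
    intro n; by_cases h : n ∈ B
    · rcases hη n with h1 | h1 <;> simp [hxB, h, hsB n h, h1]
    · simp [hxB, h]
  have hptw : ∀ (S : Finset ℕ) (x : ℕ → ℝ), (∀ n ∈ S, a n = 0) →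
      (∀ n, |x n| = if n ∈ S then 1 else |a n|) →
      ∀ n, |x n| ^ p * w n = |a n| ^ p * w n + (if n ∈ S then w n else 0) := by
    intro S x hS hx n
    by_cases h : n ∈ S
    · rw [hx n, if_pos h, if_pos h, hS n h]
      simp [Real.zero_rpow hp0.ne', Real.one_rpow]
    · rw [hx n, if_neg h, if_neg h, add_zero]
  have hsummInd : ∀ S : Finset ℕ, Summable (fun n => if n ∈ S then w n else 0) := by
    intro S
    exact summable_of_ne_finset_zero (s := S) (fun n hn => if_neg hn)
  have htsumInd : ∀ S : Finset ℕ, ∑' n, (if n ∈ S then w n else 0) = ∑ n ∈ S, w n := by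
    intro S
    rw [tsum_eq_sum (s := S) (fun b hb => if_neg hb)]
    exact Finset.sum_congr rfl (fun x hx => if_pos hx)
  have htA : ∑' n, |xA n| ^ p * w n = (∑' n, |a n| ^ p * w n) + ∑ n ∈ A, w n := by
    rw [tsum_congr (hptw A xA hsA habsA), Summable.tsum_add hsum (hsummInd A), htsumInd A]
  have htB : ∑' n, |xB n| ^ p * w n = (∑' n, |a n| ^ p * w n) + ∑ n ∈ B, w n := by
    rw [tsum_congr (hptw B xB hsB habsB), Summable.tsum_add hsum (hsummInd B), htsumInd B]
  have hbB : BddAbove (Set.range fun n => |xB n|) := by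
    refine ⟨1, ?_⟩
    rintro _ ⟨n, rfl⟩
    show |xB n| ≤ 1
    rw [habsB n]
    split_ifs with h
    · exact le_refl 1
    · exact ha n
  have hsup : (⨆ n, |xA n|) ≤ ⨆ n, |xB n| := by
    apply ciSup_le
    intro n
    by_cases h : n ∈ A
    · rw [habsA n, if_pos h]
      have hApos : 0 < ∑ m ∈ A, w m :=
        Finset.sum_pos (fun i _ => hwpos i) ⟨n, h⟩
      have hBpos : 0 < ∑ m ∈ B, w m := lt_of_lt_of_le hApos hwAB
      have hBne : B.Nonempty := by
        rcases B.eq_empty_or_nonempty with hB | hB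
        · rw [hB] at hBpos; simp at hBpos
        · exact hB
      obtain ⟨b, hb⟩ := hBne
      have h1 : (1 : ℝ) = |xB b| := by rw [habsB b, if_pos hb]
      rw [h1]
      exact le_ciSup hbB b
    · rw [habsA n, if_neg h]
      have h1 : |a n| ≤ |xB n| := by
        rw [habsB n]
        split_ifs with hb
        · rw [hsB n hb]; simp
        · exact le_refl _
      exact h1.trans (le_ciSup hbB n)
  have hnn : 0 ≤ ∑' n, |a n| ^ p * w n :=
    tsum_nonneg (fun n => mul_nonneg (Real.rpow_nonneg (abs_nonneg _) p) (hwpos n).le)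
  have hAnn : (0:ℝ) ≤ ∑ n ∈ A, w n := Finset.sum_nonneg (fun i _ => (hwpos i).le)
  have hsumle : ∑' n, |xA n| ^ p * w n ≤ ∑' n, |xB n| ^ p * w n := by
    rw [htA, htB]; linarith
  have hrpow : (∑' n, |xA n| ^ p * w n) ^ (1 / p) ≤ (∑' n, |xB n| ^ p * w n) ^ (1 / p) := by
    apply Real.rpow_le_rpow _ hsumle (by positivity)
    rw [htA]; linarith
  exact max_le_max hsup hrpow
end

section
/- Fix 1 ≤ p < q < ∞ and let w be a decreasing positive weight. In the space with norm ‖(a_n)‖ = max( (Σ|a_n|^q)^{1/q}, (Σ|a_n|^p w_n)^{1/p} ), the canonical basis is w-conservative with constant 1: if A < B are finite sets with w(A) ≤ w(B), then ‖1_A‖ ≤ ‖1_B‖. -/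
/-- The norm of the Rosenthal–Woo space `X_{q,p,w^{1/p}}`:
`‖(aₙ)‖ = max( (∑ |aₙ|^q)^{1/q}, (∑ |aₙ|ᵖ wₙ)^{1/p} )`. -/
noncomputable def rwNorm2 (q p : ℝ) (w : ℕ → ℝ) (x : ℕ → ℝ) : ℝ :=
  max ((∑' n, |x n| ^ q) ^ (1 / q)) ((∑' n, |x n| ^ p * w n) ^ (1 / p))

theorem stmt18 (p q : ℝ) (hp : 1 ≤ p) (hpq : p < q)
    (w : ℕ → ℝ) (hwpos : ∀ n, 0 < w n) (hdec : Antitone w)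
    (A B : Finset ℕ) (hAB : ∀ a ∈ A, ∀ b ∈ B, a < b)
    (hwAB : ∑ n ∈ A, w n ≤ ∑ n ∈ B, w n) :
    rwNorm2 q p w (fun m => if m ∈ A then 1 else 0) ≤
      rwNorm2 q p w (fun m => if m ∈ B then 1 else 0) := by
  have hp0 : (0:ℝ) < p := lt_of_lt_of_le one_pos hp
  have hq0 : (0:ℝ) < q := lt_trans hp0 hpq
  have key : ∀ (S : Finset ℕ) (r : ℝ), r ≠ 0 →
      (∑' n, |(if n ∈ S then (1:ℝ) else 0)| ^ r) = S.card := by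
    intro S r hr
    rw [tsum_eq_sum (s := S) (by intro n hn; simp [hn, Real.zero_rpow hr]),
      Finset.sum_congr rfl (fun n hn => by simp [hn] : ∀ n ∈ S,
        |(if n ∈ S then (1:ℝ) else 0)| ^ r = 1)]
    simp
  have key2 : ∀ (S : Finset ℕ),
      (∑' n, |(if n ∈ S then (1:ℝ) else 0)| ^ p * w n) = ∑ n ∈ S, w n := by
    intro S
    rw [tsum_eq_sum (s := S)
      (by intro n hn; simp [hn, Real.zero_rpow (ne_of_gt hp0)])]
    apply Finset.sum_congr rfl
    intro n hn; simp [hn]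
  have hcard : (A.card : ℝ) ≤ B.card := by
    rcases A.eq_empty_or_nonempty with rfl | hA
    · simp
    · set a0 := A.max' hA with ha0def
      have ha0 : a0 ∈ A := A.max'_mem hA
      have h1 : (A.card : ℝ) * w a0 ≤ ∑ n ∈ A, w n := by
        have := Finset.card_nsmul_le_sum A w (w a0)
          (fun a ha => hdec (A.le_max' a ha))
        simpa [nsmul_eq_mul] using this
      have h2 : ∑ n ∈ B, w n ≤ (B.card : ℝ) * w a0 := by
        have := Finset.sum_le_card_nsmul B w (w a0)
          (fun b hb => hdec (le_of_lt (hAB a0 ha0 b hb)))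
        simpa [nsmul_eq_mul] using this
      have := le_trans h1 (le_trans hwAB h2)
      exact le_of_mul_le_mul_right this (hwpos a0)
  have hwA0 : (0:ℝ) ≤ ∑ n ∈ A, w n :=
    Finset.sum_nonneg fun n _ => (hwpos n).le
  unfold rwNorm2
  rw [key A q (ne_of_gt hq0), key B q (ne_of_gt hq0), key2 A, key2 B]
  exact max_le_max
    (Real.rpow_le_rpow (Nat.cast_nonneg _) hcard (by positivity))
    (Real.rpow_le_rpow hwA0 hwAB (by positivity))
end

section
/- Let (e_n) be a C_q-quasi-greedy semi-normalized Schauder basis of a Banach space X. For λ > 0 define the truncation T_λ(x) = Σ_j T_λ(e_j*(x))e_j, where T_λ(z) = λ·sgn(z) if |z| ≥ λ and T_λ(z) = z otherwise. Then ‖T_λ(x)‖ ≤ C_q‖x‖ and ‖x − T_λ(x)‖ ≤ (C_q+1)‖x‖ for all x ∈ X; moreover, if Λ is a greedy set of x, α = min_{j∈Λ}|e_j*(x)|, and ε_j = sgn(e_j*(x)), then α‖Σ_{j∈Λ}ε_j e_j‖ ≤ 2C_q‖x‖. -/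
open Filter

lemma sign_mul_abs' (r : ℝ) : Real.sign r * |r| = r := by
  rcases lt_trichotomy r 0 with h | h | h
  · rw [Real.sign_of_neg h, abs_of_neg h]; ring
  · simp [h]
  · rw [Real.sign_of_pos h, abs_of_pos h]; ring

/-- Key convexity lemma: truncation minus a greedy projection is bounded. -/
lemma truncKey {X : Type*} [NormedAddCommGroup X] [NormedSpace ℝ X]
    (e : ℕ → X) (f : ℕ → X →L[ℝ] ℝ)
    (Cq : ℝ)
    (hqg : ∀ (x : X) (Λ : Finset ℕ),
      (∀ k ∈ Λ, ∀ j ∉ Λ, |f j x| ≤ |f k x|) →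
      ‖x - ∑ j ∈ Λ, f j x • e j‖ ≤ Cq * ‖x‖)
    (x : X) :
    ∀ (D : Finset ℕ), ∀ (Λ' : Finset ℕ) (lam : ℝ), 0 < lam →
      Disjoint Λ' D →
      (∀ j ∈ D, lam < |f j x|) →
      (∀ k ∈ Λ' ∪ D, ∀ j ∉ Λ' ∪ D, |f j x| ≤ |f k x|) →
      (∀ k ∈ Λ', ∀ j ∉ Λ', |f j x| ≤ |f k x|) →
      ‖x - ∑ j ∈ Λ', f j x • e j
         - ∑ j ∈ D, (f j x - lam * Real.sign (f j x)) • e j‖ ≤ Cq * ‖x‖ := by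
  intro D
  induction D using Finset.strongInduction with
  | _ D ih =>
    intro Λ' lam hlam hdisj hD hgU hgΛ'
    rcases D.eq_empty_or_nonempty with rfl | hne
    · simpa using hqg x Λ' hgΛ'
    · set b : ℝ := D.inf' hne (fun j => |f j x|) with hbdef
      have hble : ∀ j ∈ D, b ≤ |f j x| := fun j hj => Finset.inf'_le _ hj
      have hlamb : lam < b := by
        rw [hbdef, Finset.lt_inf'_iff]
        exact hD
      have hbpos : 0 < b := hlam.trans hlamb
      obtain ⟨j₀, hj₀D, hj₀⟩ := Finset.exists_mem_eq_inf' hne (fun j => |f j x|)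
      set D' : Finset ℕ := D.filter (fun j => b < |f j x|) with hD'def
      have hssub : D' ⊂ D := by
        rw [hD'def, Finset.filter_ssubset]
        exact ⟨j₀, hj₀D, by rw [← hj₀]; exact lt_irrefl _⟩
      -- terms outside D' vanish at level b
      have hsumb : ∑ j ∈ D', (f j x - b * Real.sign (f j x)) • e j
          = ∑ j ∈ D, (f j x - b * Real.sign (f j x)) • e j := by
        refine Finset.sum_subset (Finset.filter_subset _ _) (fun j hj hj' => ?_)
        have habs : |f j x| = b := by
          have h1 : ¬ b < |f j x| := by
            simpa [hD'def, hj] using hj'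
          exact le_antisymm (not_lt.1 h1) (hble j hj)
        have hfx : b * Real.sign (f j x) = f j x := by
          rw [← habs, mul_comm]
          exact sign_mul_abs' _
        rw [hfx]
        simp
      have hdisj' : Disjoint Λ' D' := hdisj.mono_right hssub.subset
      have hD'lt : ∀ j ∈ D', b < |f j x| := fun j hj => (Finset.mem_filter.1 hj).2
      have hgU' : ∀ k ∈ Λ' ∪ D', ∀ j ∉ Λ' ∪ D', |f j x| ≤ |f k x| := by
        intro k hk j hj
        rw [Finset.mem_union] at hk hj
        push_neg at hj
        rcases hk with hk | hk
        · exact hgΛ' k hk j hj.1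
        · by_cases hjD : j ∈ D
          · have : ¬ b < |f j x| := by
              have := hj.2
              simp [hD'def, hjD] at this
              exact not_lt.2 this
            exact (not_lt.1 this).trans (hD'lt k hk).le
          · refine hgU k (Finset.mem_union.2 (Or.inr (hssub.subset hk))) j ?_
            rw [Finset.mem_union]
            push_neg
            exact ⟨hj.1, hjD⟩
      have h1 : ‖x - ∑ j ∈ Λ', f j x • e j
          - ∑ j ∈ D, (f j x - b * Real.sign (f j x)) • e j‖ ≤ Cq * ‖x‖ := by
        rw [← hsumb]
        exact ih D' hssub Λ' b hbpos hdisj' hD'lt hgU' hgΛ'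
      have h2 : ‖x - ∑ j ∈ Λ', f j x • e j - ∑ j ∈ D, f j x • e j‖ ≤ Cq * ‖x‖ := by
        have := hqg x (Λ' ∪ D) hgU
        rwa [Finset.sum_union hdisj, ← sub_sub] at this
      set θ : ℝ := lam / b with hθdef
      have hθpos : 0 < θ := div_pos hlam hbpos
      have hθlt : θ < 1 := (div_lt_one hbpos).2 hlamb
      have hθb : θ * b = lam := div_mul_cancel₀ _ hbpos.ne'
      have hsum : θ • (∑ j ∈ D, (f j x - b * Real.sign (f j x)) • e j)
          + (1 - θ) • (∑ j ∈ D, f j x • e j)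
          = ∑ j ∈ D, (f j x - lam * Real.sign (f j x)) • e j := by
        rw [Finset.smul_sum, Finset.smul_sum, ← Finset.sum_add_distrib]
        refine Finset.sum_congr rfl fun j hj => ?_
        rw [smul_smul, smul_smul, ← add_smul]
        congr 1
        linear_combination (-Real.sign (f j x)) * hθb
      have hv : x - ∑ j ∈ Λ', f j x • e j
          - ∑ j ∈ D, (f j x - lam * Real.sign (f j x)) • e j
          = θ • (x - ∑ j ∈ Λ', f j x • e j
               - ∑ j ∈ D, (f j x - b * Real.sign (f j x)) • e j)
            + (1 - θ) • (x - ∑ j ∈ Λ', f j x • e j - ∑ j ∈ D, f j x • e j) := by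
        rw [← hsum]
        module
      rw [hv]
      calc ‖θ • (x - ∑ j ∈ Λ', f j x • e j
               - ∑ j ∈ D, (f j x - b * Real.sign (f j x)) • e j)
            + (1 - θ) • (x - ∑ j ∈ Λ', f j x • e j - ∑ j ∈ D, f j x • e j)‖
          ≤ ‖θ • (x - ∑ j ∈ Λ', f j x • e j
               - ∑ j ∈ D, (f j x - b * Real.sign (f j x)) • e j)‖
            + ‖(1 - θ) • (x - ∑ j ∈ Λ', f j x • e j - ∑ j ∈ D, f j x • e j)‖ :=
            norm_add_le _ _
        _ = θ * ‖x - ∑ j ∈ Λ', f j x • e j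
               - ∑ j ∈ D, (f j x - b * Real.sign (f j x)) • e j‖
            + (1 - θ) * ‖x - ∑ j ∈ Λ', f j x • e j - ∑ j ∈ D, f j x • e j‖ := by
            rw [norm_smul, norm_smul, Real.norm_eq_abs, Real.norm_eq_abs,
              abs_of_pos hθpos, abs_of_pos (by linarith : (0:ℝ) < 1 - θ)]
        _ ≤ θ * (Cq * ‖x‖) + (1 - θ) * (Cq * ‖x‖) := by
            have h3 : (0:ℝ) ≤ θ := hθpos.le
            have h4 : (0:ℝ) ≤ 1 - θ := by linarith
            gcongr
        _ = Cq * ‖x‖ := by ring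

theorem stmt19 {X : Type*} [NormedAddCommGroup X] [NormedSpace ℝ X] [CompleteSpace X]
    (e : ℕ → X) (f : ℕ → X →L[ℝ] ℝ) (c₁ c₂ : ℝ) (hc₁ : 0 < c₁)
    (hsn : ∀ n, c₁ ≤ ‖e n‖ ∧ ‖e n‖ ≤ c₂ ∧ c₁ ≤ ‖f n‖ ∧ ‖f n‖ ≤ c₂)
    (hbi : ∀ i j, f i (e j) = if i = j then (1:ℝ) else 0)
    (hexp : ∀ x : X, Tendsto (fun m => ∑ i ∈ Finset.range m, f i x • e i) atTop (nhds x))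
    (w : ℕ → ℝ) (hw : ∀ n, 0 < w n)
    (Cq : ℝ) (hCq : 1 ≤ Cq)
    (hqg : ∀ (x : X) (Λ : Finset ℕ),
      (∀ k ∈ Λ, ∀ j ∉ Λ, |f j x| ≤ |f k x|) →
      ‖x - ∑ j ∈ Λ, f j x • e j‖ ≤ Cq * ‖x‖)
    (x : X) (lam : ℝ) (hlam : 0 < lam)
    (Λ : Finset ℕ) (hΛ : ∀ j, lam < |f j x| ↔ j ∈ Λ) :
    ‖x - ∑ j ∈ Λ, (f j x - lam * Real.sign (f j x)) • e j‖ ≤ Cq * ‖x‖ ∧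
    ‖∑ j ∈ Λ, (f j x - lam * Real.sign (f j x)) • e j‖ ≤ (Cq + 1) * ‖x‖ ∧
    (∀ (Λ' : Finset ℕ), (∀ k ∈ Λ', ∀ j ∉ Λ', |f j x| ≤ |f k x|) →
      ∀ α : ℝ, 0 ≤ α → (∀ j ∈ Λ', α ≤ |f j x|) →
      α * ‖∑ j ∈ Λ', Real.sign (f j x) • e j‖ ≤ 2 * Cq * ‖x‖) := by
  have key := truncKey e f Cq hqg x
  -- part 1
  have part1 : ‖x - ∑ j ∈ Λ, (f j x - lam * Real.sign (f j x)) • e j‖ ≤ Cq * ‖x‖ := by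
    have h := key Λ ∅ lam hlam (by simp) (fun j hj => (hΛ j).2 hj)
      (by
        intro k hk j hj
        simp only [Finset.empty_union] at hk hj
        exact ((not_lt.1 ((hΛ j).not.2 hj)).trans ((hΛ k).2 hk).le))
      (by simp)
    simpa using h
  refine ⟨part1, ?_, ?_⟩
  · -- part 2
    have := norm_sub_le x (x - ∑ j ∈ Λ, (f j x - lam * Real.sign (f j x)) • e j)
    rw [sub_sub_cancel] at this
    nlinarith [norm_nonneg x, part1]
  · -- part 3
    intro Λ' hg α hα hαle
    set S := ∑ j ∈ Λ', Real.sign (f j x) • e j with hSdef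
    have hRHS : 0 ≤ 2 * Cq * ‖x‖ := by nlinarith [norm_nonneg x]
    rcases eq_or_lt_of_le hα with rfl | hαpos
    · simpa using hRHS
    -- coefficients tend to zero
    have hterm : Tendsto (fun n => f n x • e n) atTop (nhds 0) := by
      have h1 := hexp x
      have h2 : Tendsto (fun n => ∑ i ∈ Finset.range (n + 1), f i x • e i) atTop (nhds x) :=
        h1.comp (tendsto_add_atTop_nat 1)
      have := h2.sub h1
      rw [sub_self] at this
      refine this.congr fun n => ?_
      simp [Finset.sum_range_succ]
    have hcoef : Tendsto (fun n => |f n x|) atTop (nhds 0) := by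
      have hnorm : Tendsto (fun n => ‖f n x • e n‖ / c₁) atTop (nhds 0) := by
        simpa using (hterm.norm.div_const c₁)
      refine squeeze_zero (fun n => abs_nonneg _) (fun n => ?_) hnorm
      rw [norm_smul, Real.norm_eq_abs, le_div_iff₀ hc₁]
      exact mul_le_mul_of_nonneg_left (hsn n).1 (abs_nonneg _)
    -- main estimate for each 0 < μ < α
    have hboundμ : ∀ μ : ℝ, 0 < μ → μ < α → μ * ‖S‖ ≤ 2 * Cq * ‖x‖ := by
      intro μ hμpos hμα
      obtain ⟨N, hN⟩ := (hcoef.eventually (gt_mem_nhds hμpos)).exists_forall_of_atTop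
      set Λμ : Finset ℕ := (Finset.range N).filter (fun j => μ < |f j x|) with hΛμdef
      have hmemμ : ∀ j, μ < |f j x| ↔ j ∈ Λμ := by
        intro j
        constructor
        · intro hj
          have hjN : j < N := by
            by_contra h
            exact absurd hj (not_lt.2 (hN j (not_lt.1 h)).le)
          exact Finset.mem_filter.2 ⟨Finset.mem_range.2 hjN, hj⟩
        · exact fun hj => (Finset.mem_filter.1 hj).2
      have hsub : Λ' ⊆ Λμ := fun j hj => (hmemμ j).1 (hμα.trans_le (hαle j hj))
      have hfull : ‖x - ∑ j ∈ Λμ, (f j x - μ * Real.sign (f j x)) • e j‖ ≤ Cq * ‖x‖ := by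
        have h := key Λμ ∅ μ hμpos (by simp) (fun j hj => (hmemμ j).2 hj)
          (by
            intro k hk j hj
            simp only [Finset.empty_union] at hk hj
            exact ((not_lt.1 ((hmemμ j).not.2 hj)).trans ((hmemμ k).2 hk).le))
          (by simp)
        simpa using h
      have hpart : ‖x - ∑ j ∈ Λ', f j x • e j
          - ∑ j ∈ Λμ \ Λ', (f j x - μ * Real.sign (f j x)) • e j‖ ≤ Cq * ‖x‖ := by
        refine key (Λμ \ Λ') Λ' μ hμpos Finset.disjoint_sdiff
          (fun j hj => (hmemμ j).2 (Finset.mem_sdiff.1 hj).1) ?_ hg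
        rw [Finset.union_sdiff_of_subset hsub]
        intro k hk j hj
        exact ((not_lt.1 ((hmemμ j).not.2 hj)).trans ((hmemμ k).2 hk).le)
      -- identity: μ • S is the difference of the two vectors
      have hid : μ • S = (x - ∑ j ∈ Λμ, (f j x - μ * Real.sign (f j x)) • e j)
          - (x - ∑ j ∈ Λ', f j x • e j
             - ∑ j ∈ Λμ \ Λ', (f j x - μ * Real.sign (f j x)) • e j) := by
        have hsplit : ∑ j ∈ Λμ \ Λ', (f j x - μ * Real.sign (f j x)) • e j
            + ∑ j ∈ Λ', (f j x - μ * Real.sign (f j x)) • e j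
            = ∑ j ∈ Λμ, (f j x - μ * Real.sign (f j x)) • e j :=
          Finset.sum_sdiff hsub
        rw [← hsplit, hSdef, Finset.smul_sum]
        have : ∀ j ∈ Λ', μ • Real.sign (f j x) • e j
            = f j x • e j - (f j x - μ * Real.sign (f j x)) • e j := by
          intro j _
          rw [smul_smul, ← sub_smul]
          congr 1
          ring
        rw [Finset.sum_congr rfl this, Finset.sum_sub_distrib]
        abel
      have : ‖μ • S‖ ≤ 2 * Cq * ‖x‖ := by
        rw [hid]
        calc ‖_ - _‖ ≤ _ := norm_sub_le _ _
          _ ≤ Cq * ‖x‖ + Cq * ‖x‖ := add_le_add hfull hpart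
          _ = 2 * Cq * ‖x‖ := by ring
      rwa [norm_smul, Real.norm_eq_abs, abs_of_pos hμpos] at this
    -- pass to the limit μ → α
    by_contra hcon
    push_neg at hcon
    have hSpos : 0 < ‖S‖ := by
      by_contra h
      have : ‖S‖ = 0 := le_antisymm (not_lt.1 h) (norm_nonneg _)
      rw [this, mul_zero] at hcon
      exact absurd hRHS (not_le.2 hcon)
    set t : ℝ := 2 * Cq * ‖x‖ / ‖S‖ with htdef
    have htα : t < α := by
      rw [htdef, div_lt_iff₀ hSpos]
      exact hcon
    have ht0 : 0 ≤ t := div_nonneg hRHS hSpos.le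
    have hμ := hboundμ ((t + α) / 2) (by linarith) (by linarith)
    have : (t + α) / 2 * ‖S‖ > 2 * Cq * ‖x‖ := by
      have : t * ‖S‖ = 2 * Cq * ‖x‖ := div_mul_cancel₀ _ hSpos.ne'
      nlinarith
    linarith
end
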